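/- arXiv:2305.04537 — 8 statements merged into one kernel-verified Lean document; each statement's English description precedes it below -/
import Mathlib

section
/- If D = (D_0, D_1, ..., D_n) is a Hasse-Schmidt derivation of order n from a k-algebra A to a k-algebra B (i.e. D_0 is a k-algebra homomorphism, each D_i is k-linear and vanishes on the image of k, and D_l(xy) = Σ_{i+j=l} D_i(x) D_j(y) for all l ≤ n), then for each m with 1 ≤ m ≤ n, the m-th component D_m is a k-derivation of order m, i.e. it satisfies Δ(x_0⋯x_m) = Σ_{s=1}^m (-1)^{s-1} Σ_{i_1<⋯<i_s} x_{i_1}⋯x_{i_s} Δ(x_0⋯ with x_{i_1},…,x_{i_s} omitted ⋯x_m) for all x_0,…,x_m ∈ A. -/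
open Finset PowerSeries

theorem auxAlternatingSum {M : Type*} [CommRing M] (m : ℕ) (g : ℕ → M)
    (h : ∑ j ∈ Finset.range (m+2), (-1:M)^j * g j = 0) (hlast : g (m+1) = 0) :
    g 0 = ∑ r ∈ Finset.Icc 1 m, (-1:ℤ)^(r-1) • g r := by
  rw [Finset.sum_range_succ, hlast, mul_zero, add_zero, Finset.sum_range_succ'] at h
  simp only [pow_zero, one_mul] at h
  have h2 : g 0 = ∑ i ∈ Finset.range m, (-1:M)^i * g (i+1) := by
    have e : ∑ i ∈ Finset.range m, (-1:M)^(i+1) * g (i+1)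
        = - ∑ i ∈ Finset.range m, (-1:M)^i * g (i+1) := by
      rw [← Finset.sum_neg_distrib]
      exact Finset.sum_congr rfl fun i _ => by ring
    rw [e] at h
    linear_combination h
  rw [h2, show Finset.Icc 1 m = Finset.Ico 1 (m+1) from (Finset.Ico_add_one_right_eq_Icc 1 m).symm,
    Finset.sum_Ico_eq_sum_range]
  simp only [Nat.add_sub_cancel]
  refine Finset.sum_congr rfl fun i _ => ?_
  have : 1 + i - 1 = i := by omega
  rw [this, zsmul_eq_mul, add_comm 1 i]
  push_cast
  ring



/-- Nakai's notion of a `k`-derivation of order `m` from `A` to `M`, where the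
scalar action of `A` on the target `M` is supplied explicitly by `smul`
(for an honest `A`-module one takes `smul := (· • ·)`).  It consists of
additivity, `k`-linearity, and the order-`m` Leibniz-type identity. -/
def IsHigherDer (k : Type*) {A M : Type*} [CommRing k] [CommRing A] [Algebra k A]
    [AddCommGroup M] (m : ℕ) (smul : A → M → M) (Δ : A → M) : Prop :=
  (∀ x y : A, Δ (x + y) = Δ x + Δ y) ∧
  (∀ (c : k) (x : A), Δ (algebraMap k A c * x) = smul (algebraMap k A c) (Δ x)) ∧
  ∀ x : Fin (m + 1) → A,
    Δ (∏ i, x i) =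
      ∑ r ∈ Finset.Icc 1 m, (-1 : ℤ) ^ (r - 1) •
        ∑ S ∈ Finset.powersetCard r (Finset.univ : Finset (Fin (m + 1))),
          smul (∏ i ∈ S, x i) (Δ (∏ i ∈ Finset.univ \ S, x i))

/-- If `(D_0, …, D_n)` is a Hasse-Schmidt derivation of order `n` from `A` to `B`
over `k`, then for `1 ≤ m ≤ n` the `m`-th component `D m` is a `k`-derivation of
order `m`, where `B` is viewed as an `A`-module via the algebra homomorphism `D 0`. -/
theorem hasseSchmidt_component_isHigherDer
    (k A B : Type*) [CommRing k] [CommRing A] [CommRing B] [Algebra k A] [Algebra k B]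
    (n : ℕ) (D : ℕ → A → B)
    (hD0_algebraMap : ∀ c : k, D 0 (algebraMap k A c) = algebraMap k B c)
    (hD0_mul : ∀ x y : A, D 0 (x * y) = D 0 x * D 0 y)
    (hD0_one : D 0 1 = 1)
    (hadd : ∀ i, ∀ x y : A, D i (x + y) = D i x + D i y)
    (hklin : ∀ i, ∀ (c : k) (x : A),
      D i (algebraMap k A c * x) = algebraMap k B c * D i x)
    (hvanish : ∀ i, 1 ≤ i → i ≤ n → ∀ c : k, D i (algebraMap k A c) = 0)
    (hleibniz : ∀ l ≤ n, ∀ x y : A,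
      D l (x * y) = ∑ p ∈ Finset.HasAntidiagonal.antidiagonal l, D p.1 x * D p.2 y)
    (m : ℕ) (h1m : 1 ≤ m) (hmn : m ≤ n) :
    IsHigherDer k m (fun a b => D 0 a * b) (D m) := by
  classical
  refine ⟨hadd m, fun c x => by simp only; rw [hklin m, hD0_algebraMap], fun x => ?_⟩
  simp only
  set φ : A → PowerSeries B := fun a => PowerSeries.mk (fun i => D i a) with hφ
  have hcoeff : ∀ (a : A) (l : ℕ), (PowerSeries.coeff l) (φ a) = D l a := by
    intro a l; simp [hφ]
  -- key: coeff of product of φ's agrees with D of product, up to degree n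
  have key : ∀ (T : Finset (Fin (m+1))), ∀ l ≤ n,
      D l (∏ i ∈ T, x i) = PowerSeries.coeff l (∏ i ∈ T, φ (x i)) := by
    intro T
    induction T using Finset.induction with
    | empty =>
      intro l hl
      simp only [Finset.prod_empty]
      rcases Nat.eq_zero_or_pos l with h0 | h1
      · subst h0; simp [hD0_one]
      · have h1' : D l (1 : A) = 0 := by
          simpa using hvanish l h1 hl 1
        rw [h1', PowerSeries.coeff_one, if_neg (Nat.one_le_iff_ne_zero.mp h1)]
    | @insert a T ha ih =>
      intro l hl
      rw [Finset.prod_insert ha, Finset.prod_insert ha, hleibniz l hl,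
        PowerSeries.coeff_mul]
      refine Finset.sum_congr rfl fun p hp => ?_
      have hp2 : p.2 ≤ l := by
        have := Finset.HasAntidiagonal.mem_antidiagonal.mp hp; omega
      rw [hcoeff, ih p.2 (hp2.trans hl)]
  -- the product ∏ (φ (x i) - C (D 0 (x i))) is divisible by X^(m+1)
  have hdvd : (PowerSeries.X : PowerSeries B) ^ (m+1) ∣
      ∏ i : Fin (m+1), (φ (x i) - PowerSeries.C (D 0 (x i))) := by
    have h1 : ∀ i ∈ (univ : Finset (Fin (m+1))),
        (PowerSeries.X : PowerSeries B) ∣ (φ (x i) - PowerSeries.C (D 0 (x i))) := by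
      intro i _
      rw [PowerSeries.X_dvd_iff, map_sub]
      simp [hφ, PowerSeries.constantCoeff_C, ← PowerSeries.coeff_zero_eq_constantCoeff_apply]
    have := Finset.prod_dvd_prod_of_dvd (s := (univ : Finset (Fin (m+1))))
      (fun _ => (PowerSeries.X : PowerSeries B))
      (fun i => (φ (x i) - PowerSeries.C (D 0 (x i)))) h1
    simpa using this
  have hc0 : (PowerSeries.coeff m)
      (∏ i : Fin (m+1), (φ (x i) - PowerSeries.C (D 0 (x i)))) = 0 :=
    PowerSeries.X_pow_dvd_iff.mp hdvd m (Nat.lt_succ_self m)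
  -- expand the product
  have hexp : (∏ i : Fin (m+1), (φ (x i) - PowerSeries.C (D 0 (x i)))) =
      ∑ t ∈ (univ : Finset (Fin (m+1))).powerset,
        ((-1 : PowerSeries B) ^ t.card * PowerSeries.C (∏ i ∈ t, D 0 (x i))) *
          ∏ i ∈ univ \ t, φ (x i) := by
    rw [show (fun i => φ (x i) - PowerSeries.C (D 0 (x i)))
        = fun i => (- PowerSeries.C (D 0 (x i))) + φ (x i) from funext fun i => by ring] at *
    rw [Finset.prod_add]
    refine Finset.sum_congr rfl fun t _ => ?_
    congr 1
    rw [show (fun i => - PowerSeries.C (D 0 (x i)))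
        = fun i => (-1 : PowerSeries B) * PowerSeries.C (D 0 (x i)) from funext fun i => by ring]
    rw [Finset.prod_mul_distrib, Finset.prod_const, map_prod]
  -- now take coeff m of the expansion
  rw [hexp, map_sum] at hc0
  have hterm : ∀ t ∈ (univ : Finset (Fin (m+1))).powerset,
      (PowerSeries.coeff m)
        (((-1 : PowerSeries B) ^ t.card * PowerSeries.C (∏ i ∈ t, D 0 (x i))) *
          ∏ i ∈ univ \ t, φ (x i))
      = (-1 : B) ^ t.card * ((∏ i ∈ t, D 0 (x i)) * D m (∏ i ∈ univ \ t, x i)) := by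
    intro t _
    have : ((-1 : PowerSeries B) ^ t.card * PowerSeries.C (∏ i ∈ t, D 0 (x i)))
        = PowerSeries.C ((-1 : B) ^ t.card * ∏ i ∈ t, D 0 (x i)) := by
      rw [map_mul, map_pow, map_neg, map_one]
    rw [this, PowerSeries.coeff_C_mul, key (univ \ t) m hmn, mul_assoc]
  rw [Finset.sum_congr rfl hterm] at hc0
  -- split the powerset sum by cardinality
  rw [Finset.powerset_card_biUnion, Finset.sum_biUnion
    ((Finset.pairwise_disjoint_powersetCard _).set_pairwise _)] at hc0
  have hD0prod : ∀ (t : Finset (Fin (m+1))), ∏ i ∈ t, D 0 (x i) = D 0 (∏ i ∈ t, x i) := by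
    intro t
    induction t using Finset.induction with
    | empty => simp [hD0_one]
    | @insert a T ha ih => rw [Finset.prod_insert ha, Finset.prod_insert ha, hD0_mul, ih]
  have hcard : ∀ j, ∀ t ∈ Finset.powersetCard j (univ : Finset (Fin (m+1))),
      (-1:B)^t.card * ((∏ i ∈ t, D 0 (x i)) * D m (∏ i ∈ univ \ t, x i))
      = (-1:B)^j * (D 0 (∏ i ∈ t, x i) * D m (∏ i ∈ univ \ t, x i)) := by
    intro j t ht
    rw [(Finset.mem_powersetCard.mp ht).2, hD0prod]
  rw [Finset.sum_congr rfl (fun j _ => Finset.sum_congr rfl (hcard j))] at hc0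
  rw [Finset.sum_congr rfl
    (fun j (_ : j ∈ Finset.range ((univ : Finset (Fin (m+1))).card + 1)) =>
      (Finset.mul_sum ((Finset.powersetCard j (univ : Finset (Fin (m+1)))))
        (fun t => D 0 (∏ i ∈ t, x i) * D m (∏ i ∈ univ \ t, x i)) ((-1:B)^j)).symm)] at hc0
  rw [Finset.card_univ, Fintype.card_fin] at hc0
  have hDm1 : D m (1:A) = 0 := by simpa using hvanish m h1m hmn 1
  have hlast : ∑ t ∈ Finset.powersetCard (m+1) (univ : Finset (Fin (m+1))),
      D 0 (∏ i ∈ t, x i) * D m (∏ i ∈ univ \ t, x i) = 0 := by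
    have hps : Finset.powersetCard (m+1) (univ : Finset (Fin (m+1))) = {univ} := by
      have h := Finset.powersetCard_self (univ : Finset (Fin (m+1)))
      rwa [Finset.card_univ, Fintype.card_fin] at h
    rw [hps, Finset.sum_singleton, Finset.sdiff_self, Finset.prod_empty, hDm1, mul_zero]
  have hfirst : ∑ t ∈ Finset.powersetCard 0 (univ : Finset (Fin (m+1))),
      D 0 (∏ i ∈ t, x i) * D m (∏ i ∈ univ \ t, x i) = D m (∏ i, x i) := by
    rw [Finset.powersetCard_zero, Finset.sum_singleton, Finset.prod_empty, hD0_one,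
      Finset.sdiff_empty, one_mul]
  have := auxAlternatingSum (M := B) m
    (fun j => ∑ t ∈ Finset.powersetCard j (univ : Finset (Fin (m+1))),
      D 0 (∏ i ∈ t, x i) * D m (∏ i ∈ univ \ t, x i)) hc0 hlast
  beta_reduce at this
  rw [hfirst] at this
  exact this
end

section
/- Let k be a ring, A a k-algebra, A_n the Hasse-Schmidt algebra of A over k of order n, B_n = A_n[t]/(t^{n+1}), and M an A_n-module. If D : A_n → M is a k-derivation of order m, then the map D̄ : A → M ⊗_{A_n} B_n defined by D̄(a) = Σ_{i=0}^n D(d_i(a)) ⊗ t^i is a k-derivation of order m, where A acts on M ⊗_{A_n} B_n via the homomorphism γ_n^# : A → B_n, a ↦ Σ_{j=0}^n d_j(a) t^j. -/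
open TensorProduct

/-- The truncated polynomial ring `B_n = C[t]/(t^{n+1})`. -/
noncomputable abbrev truncB (C : Type*) [CommRing C] (n : ℕ) :=
  Polynomial C ⧸ Ideal.span {(Polynomial.X : Polynomial C) ^ (n + 1)}

/-- The action of `a ∈ A` on `M ⊗_{A_n} B_n` through `γ_n^#(a) = ∑_j d_j(a) t^j`,
i.e. multiplication by `γ_n^#(a)` on the `B_n` factor. -/
noncomputable def gammaSmul {A C : Type*} [CommRing A] [CommRing C]
    (n : ℕ) (d : ℕ → A → C) (M : Type*) [AddCommGroup M] [Module C M]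
    (a : A) (z : M ⊗[C] truncB C n) : M ⊗[C] truncB C n :=
  LinearMap.lTensor M (LinearMap.mulLeft C
    (∑ j ∈ Finset.range (n + 1),
      Ideal.Quotient.mk (Ideal.span {(Polynomial.X : Polynomial C) ^ (n + 1)})
        (Polynomial.C (d j a) * Polynomial.X ^ j))) z

section HSaux

open Polynomial

variable {C : Type*} [CommRing C] (n : ℕ) {M : Type*} [AddCommGroup M] [Module C M]

/-- Truncation map `C[X] → B_n`. -/
noncomputable def trPi (C : Type*) [CommRing C] (n : ℕ) : Polynomial C →+* truncB C n :=
  Ideal.Quotient.mk (Ideal.span {(Polynomial.X : Polynomial C) ^ (n + 1)})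

theorem trPi_eq_iff (f g : Polynomial C) :
    trPi C n f = trPi C n g ↔ ∀ l ≤ n, f.coeff l = g.coeff l := by
  rw [trPi, Ideal.Quotient.eq, Ideal.mem_span_singleton, X_pow_dvd_iff]
  constructor
  · intro h l hl
    have := h l (by omega)
    rw [coeff_sub, sub_eq_zero] at this
    exact this
  · intro h l hl
    rw [coeff_sub, sub_eq_zero]
    exact h l (by omega)

theorem trPi_pow_zero {i : ℕ} (hi : n + 1 ≤ i) : trPi C n (X ^ i : Polynomial C) = 0 := by
  rw [trPi, Ideal.Quotient.eq_zero_iff_mem, Ideal.mem_span_singleton]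
  exact pow_dvd_pow _ hi

theorem trPi_smul (c : C) (p : Polynomial C) : trPi C n (c • p) = c • trPi C n p := by
  have : trPi C n = ⇑(Ideal.Quotient.mkₐ C
      (Ideal.span {(Polynomial.X : Polynomial C) ^ (n + 1)})) := by
    rw [Ideal.Quotient.mkₐ_eq_mk]; rfl
  rw [this]
  exact map_smul _ _ _

theorem trPi_C_mul (c : C) (p : Polynomial C) :
    trPi C n (Polynomial.C c * p) = c • trPi C n p := by
  rw [← smul_eq_C_mul, trPi_smul]

variable (M) in
/-- Multiplication by `π g` on the second tensor factor. -/
noncomputable def smulP (g : Polynomial C) :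
    M ⊗[C] truncB C n →ₗ[C] M ⊗[C] truncB C n :=
  LinearMap.lTensor M (LinearMap.mulLeft C (trPi C n g))

theorem smulP_congr {g g' : Polynomial C} (h : trPi C n g = trPi C n g') :
    smulP n M g = smulP n M g' := by
  unfold smulP; rw [h]

theorem smulP_add (g h : Polynomial C) :
    smulP n M (g + h) = smulP n M g + smulP n M h := by
  unfold smulP
  rw [map_add, show LinearMap.mulLeft C (trPi C n g + trPi C n h)
      = LinearMap.mulLeft C (trPi C n g) + LinearMap.mulLeft C (trPi C n h) from
    LinearMap.ext fun x => add_mul _ _ _, LinearMap.lTensor_add]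

theorem smulP_tmul (g : Polynomial C) (u : M) (b : truncB C n) :
    smulP n M g (u ⊗ₜ[C] b) = u ⊗ₜ[C] (trPi C n g * b) := by
  simp [smulP]

theorem smulP_monomial_tmul (s : ℕ) (c : C) (u : M) (i : ℕ) :
    smulP n M (monomial s c) (u ⊗ₜ[C] trPi C n (X ^ i)) =
      (c • u) ⊗ₜ[C] trPi C n (X ^ (s + i)) := by
  rw [smulP_tmul, ← map_mul]
  have h1 : (monomial s c : Polynomial C) * X ^ i = c • X ^ (s + i) := by
    rw [smul_eq_C_mul, ← C_mul_X_pow_eq_monomial, mul_assoc, ← pow_add]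
  rw [h1, trPi_smul, tmul_smul, smul_tmul']

variable (M) in
/-- The map `Φ : C[X] → M ⊗ B_n`, `Σ c_i X^i ↦ Σ D(c_i) ⊗ t^i`. -/
noncomputable def Phi (D : C → M) (f : Polynomial C) : M ⊗[C] truncB C n :=
  f.sum fun i c => D c ⊗ₜ[C] trPi C n (X ^ i)

variable {D : C → M}

theorem Phi_monomial (hD0 : D 0 = 0) (i : ℕ) (c : C) :
    Phi n M D (monomial i c) = D c ⊗ₜ[C] trPi C n (X ^ i) :=
  sum_monomial_index _ _ (by rw [hD0, zero_tmul])

theorem Phi_add (hD0 : D 0 = 0) (hadd : ∀ x y, D (x + y) = D x + D y) (f g : Polynomial C) :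
    Phi n M D (f + g) = Phi n M D f + Phi n M D g :=
  sum_add_index _ _ _ (fun _ => by rw [hD0, zero_tmul])
    (fun _ b₁ b₂ => by rw [hadd, add_tmul])

theorem Phi_trunc (hD0 : D 0 = 0) (f : Polynomial C) :
    Phi n M D f = ∑ i ∈ Finset.range (n + 1), D (f.coeff i) ⊗ₜ[C] trPi C n (X ^ i) := by
  rw [Phi, sum_eq_of_subset _ (fun _ => by rw [hD0, zero_tmul])
    (Finset.subset_union_left (s₂ := Finset.range (n + 1)))]
  rw [← Finset.sum_subset (Finset.subset_union_right (s₁ := f.support))]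
  intro i _ hni
  rw [trPi_pow_zero n (by simpa using hni), tmul_zero]

theorem Phi_congr (hD0 : D 0 = 0) {f g : Polynomial C} (h : trPi C n f = trPi C n g) :
    Phi n M D f = Phi n M D g := by
  rw [Phi_trunc n hD0 f, Phi_trunc n hD0 g]
  refine Finset.sum_congr rfl fun i hi => ?_
  rw [(trPi_eq_iff n f g).1 h i (by simpa using Nat.lt_succ_iff.1 (Finset.mem_range.1 hi))]

/-- Product of monomials is a monomial. -/
theorem prod_monomial {q : ℕ} (S : Finset (Fin q)) (μ : Fin q → ℕ) (c : Fin q → C) :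
    (∏ i ∈ S, (monomial (μ i) (c i) : Polynomial C)) =
      monomial (∑ i ∈ S, μ i) (∏ i ∈ S, c i) := by
  simp_rw [← C_mul_X_pow_eq_monomial]
  rw [Finset.prod_mul_distrib, ← map_prod, Finset.prod_pow_eq_pow_sum]

section Core

variable {m : ℕ}

/-- LHS of the order-`m` identity as a ℕ-multilinear map. -/
noncomputable def Lmap (n : ℕ) (M : Type*) [AddCommGroup M] [Module C M]
    (D : C → M) (hD0 : D 0 = 0) (hadd : ∀ x y : C, D (x + y) = D x + D y) (m : ℕ) :
    MultilinearMap ℕ (fun _ : Fin (m + 1) => Polynomial C) (M ⊗[C] truncB C n) where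
  toFun f := Phi n M D (∏ i, f i)
  map_update_add' f j a b := by
    have hinst : ‹DecidableEq (Fin (m + 1))› = instDecidableEqFin (m + 1) :=
      Subsingleton.elim _ _
    subst hinst
    have hp : ∀ v : Polynomial C, (∏ i, Function.update f j v i) =
        v * ∏ i ∈ Finset.univ \ {j}, f i := fun v =>
      Finset.prod_update_of_mem (Finset.mem_univ j) f v
    rw [hp, hp, hp, add_mul, Phi_add n hD0 hadd]
  map_update_smul' f j c a := by
    have hinst : ‹DecidableEq (Fin (m + 1))› = instDecidableEqFin (m + 1) :=
      Subsingleton.elim _ _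
    subst hinst
    have hp : ∀ v : Polynomial C, (∏ i, Function.update f j v i) =
        v * ∏ i ∈ Finset.univ \ {j}, f i := fun v =>
      Finset.prod_update_of_mem (Finset.mem_univ j) f v
    rw [hp, hp, smul_mul_assoc]
    exact (AddMonoidHom.mk' (Phi n M D) (Phi_add n hD0 hadd)).map_nsmul _ _

/-- RHS of the order-`m` identity as a ℕ-multilinear map. -/
noncomputable def Rmap (n : ℕ) (M : Type*) [AddCommGroup M] [Module C M]
    (D : C → M) (hD0 : D 0 = 0) (hadd : ∀ x y : C, D (x + y) = D x + D y) (m : ℕ) :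
    MultilinearMap ℕ (fun _ : Fin (m + 1) => Polynomial C) (M ⊗[C] truncB C n) where
  toFun f := ∑ r ∈ Finset.Icc 1 m, (-1 : ℤ) ^ (r - 1) •
      ∑ S ∈ Finset.powersetCard r (Finset.univ : Finset (Fin (m + 1))),
        smulP n M (∏ i ∈ S, f i) (Phi n M D (∏ i ∈ Finset.univ \ S, f i))
  map_update_add' f j a b := by
    have hinst : ‹DecidableEq (Fin (m + 1))› = instDecidableEqFin (m + 1) :=
      Subsingleton.elim _ _
    subst hinst
    rw [← Finset.sum_add_distrib]
    refine Finset.sum_congr rfl fun r _ => ?_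
    rw [← smul_add, ← Finset.sum_add_distrib]
    congr 1
    refine Finset.sum_congr rfl fun S _ => ?_
    by_cases hj : j ∈ S
    · have h1 : ∀ v : Polynomial C, ∏ i ∈ S, Function.update f j v i =
          v * ∏ i ∈ S \ {j}, f i := fun v => Finset.prod_update_of_mem hj f v
      have h2 : ∀ v : Polynomial C, ∏ i ∈ Finset.univ \ S, Function.update f j v i =
          ∏ i ∈ Finset.univ \ S, f i := fun v =>
        Finset.prod_congr rfl fun i hi =>
          Function.update_of_ne (fun h => (Finset.mem_sdiff.1 hi).2 (by rw [h]; exact hj)) _ _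
      rw [h1, h1, h1, h2, h2, h2, add_mul, smulP_add, LinearMap.add_apply]
    · have h1 : ∀ v : Polynomial C, ∏ i ∈ S, Function.update f j v i =
          ∏ i ∈ S, f i := fun v =>
        Finset.prod_congr rfl fun i hi =>
          Function.update_of_ne (fun h => hj (by rw [← h]; exact hi)) _ _
      have hj' : j ∈ Finset.univ \ S := Finset.mem_sdiff.2 ⟨Finset.mem_univ _, hj⟩
      have h2 : ∀ v : Polynomial C, ∏ i ∈ Finset.univ \ S, Function.update f j v i =
          v * ∏ i ∈ (Finset.univ \ S) \ {j}, f i := fun v =>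
        Finset.prod_update_of_mem hj' f v
      rw [h1, h1, h1, h2, h2, h2, add_mul, Phi_add n hD0 hadd, map_add]
  map_update_smul' f j c a := by
    have hinst : ‹DecidableEq (Fin (m + 1))› = instDecidableEqFin (m + 1) :=
      Subsingleton.elim _ _
    subst hinst
    conv_rhs => rw [Finset.smul_sum]
    refine Finset.sum_congr rfl fun r _ => ?_
    conv_rhs => rw [smul_comm c, Finset.smul_sum]
    congr 1
    refine Finset.sum_congr rfl fun S _ => ?_
    by_cases hj : j ∈ S
    · have h1 : ∀ v : Polynomial C, ∏ i ∈ S, Function.update f j v i =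
          v * ∏ i ∈ S \ {j}, f i := fun v => Finset.prod_update_of_mem hj f v
      have h2 : ∀ v : Polynomial C, ∏ i ∈ Finset.univ \ S, Function.update f j v i =
          ∏ i ∈ Finset.univ \ S, f i := fun v =>
        Finset.prod_congr rfl fun i hi =>
          Function.update_of_ne (fun h => (Finset.mem_sdiff.1 hi).2 (by rw [h]; exact hj)) _ _
      rw [h1, h1, h2, h2, smul_mul_assoc]
      have hs : smulP n M (c • (a * ∏ i ∈ S \ {j}, f i)) =
          c • smulP n M (a * ∏ i ∈ S \ {j}, f i) := by
        induction c with
        | zero =>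
          rw [zero_smul, zero_smul]
          have h0 := smulP_add n (M := M) (0 : Polynomial C) 0
          rw [add_zero] at h0
          exact left_eq_add.mp h0
        | succ k ih => rw [succ_nsmul, smulP_add, ih, succ_nsmul]
      rw [hs, LinearMap.smul_apply]
    · have h1 : ∀ v : Polynomial C, ∏ i ∈ S, Function.update f j v i =
          ∏ i ∈ S, f i := fun v =>
        Finset.prod_congr rfl fun i hi =>
          Function.update_of_ne (fun h => hj (by rw [← h]; exact hi)) _ _
      have hj' : j ∈ Finset.univ \ S := Finset.mem_sdiff.2 ⟨Finset.mem_univ _, hj⟩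
      have h2 : ∀ v : Polynomial C, ∏ i ∈ Finset.univ \ S, Function.update f j v i =
          v * ∏ i ∈ (Finset.univ \ S) \ {j}, f i := fun v =>
        Finset.prod_update_of_mem hj' f v
      rw [h1, h1, h2, h2, smul_mul_assoc]
      have hphi : Phi n M D (c • (a * ∏ i ∈ (Finset.univ \ S) \ {j}, f i)) =
          c • Phi n M D (a * ∏ i ∈ (Finset.univ \ S) \ {j}, f i) := by
        induction c with
        | zero =>
          rw [zero_smul, zero_smul]
          have h0 := Phi_add n (M := M) hD0 hadd (0 : Polynomial C) 0
          rw [add_zero] at h0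
          exact left_eq_add.mp h0
        | succ k ih => rw [succ_nsmul, Phi_add n hD0 hadd, ih, succ_nsmul]
      rw [hphi, map_nsmul]

/-- Core lemma: the order-`m` identity for `Φ` on products of polynomials. -/
theorem Phi_prod_eq
    (hD0 : D 0 = 0) (hadd : ∀ x y : C, D (x + y) = D x + D y)
    (horder : ∀ x : Fin (m + 1) → C,
      D (∏ i, x i) = ∑ r ∈ Finset.Icc 1 m, (-1 : ℤ) ^ (r - 1) •
        ∑ S ∈ Finset.powersetCard r (Finset.univ : Finset (Fin (m + 1))),
          (∏ i ∈ S, x i) • D (∏ i ∈ Finset.univ \ S, x i))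
    (f : Fin (m + 1) → Polynomial C) :
    Phi n M D (∏ i, f i) =
      ∑ r ∈ Finset.Icc 1 m, (-1 : ℤ) ^ (r - 1) •
        ∑ S ∈ Finset.powersetCard r (Finset.univ : Finset (Fin (m + 1))),
          smulP n M (∏ i ∈ S, f i) (Phi n M D (∏ i ∈ Finset.univ \ S, f i)) := by
  classical
  set L := Lmap n M D hD0 hadd m with hL
  set R := Rmap n M D hD0 hadd m with hR
  -- key: L and R agree on monomial tuples
  have key : ∀ (μ : Fin (m + 1) → ℕ) (c : Fin (m + 1) → C),
      L (fun i => monomial (μ i) (c i)) = R (fun i => monomial (μ i) (c i)) := by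
    intro μ c
    show Phi n M D (∏ i, monomial (μ i) (c i)) = _
    rw [prod_monomial, Phi_monomial n hD0, horder c]
    let T : M →+ M ⊗[C] truncB C n :=
      ((TensorProduct.mk C M (truncB C n)).flip
        (trPi C n (X ^ (∑ i, μ i)))).toAddMonoidHom
    have hT : ∀ u : M, u ⊗ₜ[C] trPi C n (X ^ (∑ i, μ i)) = T u := fun _ => rfl
    rw [hT, map_sum]
    show _ = Rmap n M D hD0 hadd m (fun i => monomial (μ i) (c i))
    unfold Rmap
    show _ = ∑ r ∈ Finset.Icc 1 m, (-1 : ℤ) ^ (r - 1) •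
      ∑ S ∈ Finset.powersetCard r (Finset.univ : Finset (Fin (m + 1))),
        smulP n M (∏ i ∈ S, (monomial (μ i) (c i) : Polynomial C))
          (Phi n M D (∏ i ∈ Finset.univ \ S, (monomial (μ i) (c i) : Polynomial C)))
    refine Finset.sum_congr rfl fun r _ => ?_
    rw [T.map_zsmul]
    congr 1
    rw [map_sum]
    refine Finset.sum_congr rfl fun S hS => ?_
    rw [prod_monomial, prod_monomial, Phi_monomial n hD0, smulP_monomial_tmul]
    have hsum : (∑ i ∈ S, μ i) + ∑ i ∈ Finset.univ \ S, μ i = ∑ i, μ i := by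
      rw [add_comm]
      exact Finset.sum_sdiff (Finset.subset_univ S)
    rw [hsum]
    rfl
  -- expand each polynomial into monomials
  set N := (Finset.univ.sup fun i => (f i).natDegree) + 1 with hN
  have hdeg : ∀ i, (f i).natDegree < N :=
    fun i => Nat.lt_succ_of_le (Finset.le_sup (f := fun i => (f i).natDegree) (Finset.mem_univ i))
  have hf : ∀ i, f i = ∑ j ∈ Finset.range N, monomial j ((f i).coeff j) :=
    fun i => (f i).as_sum_range' N (hdeg i)
  have hLf : Phi n M D (∏ i, f i) = L f := rfl
  have hRf : (∑ r ∈ Finset.Icc 1 m, (-1 : ℤ) ^ (r - 1) •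
      ∑ S ∈ Finset.powersetCard r (Finset.univ : Finset (Fin (m + 1))),
        smulP n M (∏ i ∈ S, f i) (Phi n M D (∏ i ∈ Finset.univ \ S, f i))) = R f := rfl
  rw [hLf, hRf, show f = fun i => ∑ j ∈ Finset.range N, monomial j ((f i).coeff j) from
    funext hf]
  rw [L.map_sum_finset (fun i j => monomial j ((f i).coeff j)) (fun _ => Finset.range N),
    R.map_sum_finset (fun i j => monomial j ((f i).coeff j)) (fun _ => Finset.range N)]
  exact Finset.sum_congr rfl fun μ _ => key (fun i => μ i) (fun i => (f i).coeff (μ i))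

end Core

end HSaux

/-- Theorem (main theorem, part of (1)): given a Hasse-Schmidt derivation
`(d_0, …, d_n)` from `A` to the Hasse-Schmidt algebra `A_n = C` and an order-`m`
`k`-derivation `D : A_n → M`, the map `D̄ : A → M ⊗_{A_n} B_n`,
`a ↦ ∑_{i=0}^n D(d_i(a)) ⊗ t^i`, is an order-`m` `k`-derivation, where `A` acts
on `M ⊗_{A_n} B_n` via `γ_n^# : a ↦ ∑_j d_j(a) t^j`. -/
theorem bar_isHigherDer
    (k A C : Type*) [CommRing k] [CommRing A] [CommRing C] [Algebra k A] [Algebra k C]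
    (n : ℕ) (d : ℕ → A → C)
    (hd0_algebraMap : ∀ c : k, d 0 (algebraMap k A c) = algebraMap k C c)
    (hd0_mul : ∀ x y : A, d 0 (x * y) = d 0 x * d 0 y)
    (hd0_one : d 0 1 = 1)
    (hdadd : ∀ i, ∀ x y : A, d i (x + y) = d i x + d i y)
    (hdklin : ∀ i, ∀ (c : k) (x : A),
      d i (algebraMap k A c * x) = algebraMap k C c * d i x)
    (hdvanish : ∀ i, 1 ≤ i → i ≤ n → ∀ c : k, d i (algebraMap k A c) = 0)
    (hdleibniz : ∀ l ≤ n, ∀ x y : A,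
      d l (x * y) = ∑ p ∈ Finset.HasAntidiagonal.antidiagonal l, d p.1 x * d p.2 y)
    (M : Type*) [AddCommGroup M] [Module C M]
    (m : ℕ) (hm : 1 ≤ m)
    (D : C → M) (hD : IsHigherDer k m (fun (c : C) (z : M) => c • z) D) :
    IsHigherDer k m (gammaSmul n d M)
      (fun a => ∑ i ∈ Finset.range (n + 1),
        D (d i a) ⊗ₜ[C]
          Ideal.Quotient.mk (Ideal.span {(Polynomial.X : Polynomial C) ^ (n + 1)})
            (Polynomial.X ^ i)) := by
  classical
  obtain ⟨hDadd, hDklin, hDorder⟩ := hD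
  have hD0 : D 0 = 0 := by
    have h := hDadd 0 0
    rw [add_zero] at h
    exact (left_eq_add.mp h)
  have hmk : ∀ p : Polynomial C,
      Ideal.Quotient.mk (Ideal.span {(Polynomial.X : Polynomial C) ^ (n + 1)}) p =
        trPi C n p := fun _ => rfl
  set γP : A → Polynomial C := fun a =>
    ∑ j ∈ Finset.range (n + 1), Polynomial.C (d j a) * Polynomial.X ^ j with hγP
  have hPhiSum : ∀ (s : Finset ℕ) (g : ℕ → Polynomial C),
      Phi n M D (∑ j ∈ s, g j) = ∑ j ∈ s, Phi n M D (g j) := fun s g =>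
    map_sum (AddMonoidHom.mk' (Phi n M D) (Phi_add n hD0 hDadd)) g s
  have hbar : ∀ a : A,
      (∑ i ∈ Finset.range (n + 1), D (d i a) ⊗ₜ[C] trPi C n (Polynomial.X ^ i)) =
        Phi n M D (γP a) := by
    intro a
    rw [hγP]
    dsimp only
    rw [hPhiSum]
    refine Finset.sum_congr rfl fun j _ => ?_
    rw [Polynomial.C_mul_X_pow_eq_monomial, Phi_monomial n hD0]
  have hγsmul : ∀ a : A, gammaSmul n d M a = ⇑(smulP n M (γP a)) := by
    intro a
    funext z
    show gammaSmul n d M a z = smulP n M (γP a) z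
    rw [gammaSmul, smulP, hγP]
    dsimp only
    rw [map_sum (trPi C n)]
    rfl
  have hcoeff : ∀ (a : A) (l : ℕ), l ≤ n → (γP a).coeff l = d l a := by
    intro a l hl
    rw [hγP]
    dsimp only
    rw [Polynomial.finset_sum_coeff]
    simp only [Polynomial.C_mul_X_pow_eq_monomial, Polynomial.coeff_monomial]
    rw [Finset.sum_ite_eq' (Finset.range (n + 1)) l (fun j => d j a)]
    simp [Nat.lt_succ_iff, hl]
  have hγone : trPi C n (γP 1) = 1 := by
    rw [show (1 : truncB C n) = trPi C n 1 from (map_one (trPi C n)).symm]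
    refine (trPi_eq_iff n _ _).2 fun l hl => ?_
    rw [hcoeff 1 l hl, Polynomial.coeff_one]
    rcases Nat.eq_zero_or_pos l with rfl | hpos
    · simpa using hd0_one
    · have h1 : (1 : A) = algebraMap k A 1 := (map_one _).symm
      rw [if_neg (by omega), h1, hdvanish l hpos hl 1]
  have hγmul : ∀ x y : A, trPi C n (γP (x * y)) = trPi C n (γP x) * trPi C n (γP y) := by
    intro x y
    rw [← map_mul (trPi C n)]
    refine (trPi_eq_iff n _ _).2 fun l hl => ?_
    rw [hcoeff (x * y) l hl, Polynomial.coeff_mul, hdleibniz l hl x y]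
    refine Finset.sum_congr rfl fun p hp => ?_
    have hp' := Finset.HasAntidiagonal.mem_antidiagonal.1 hp
    rw [hcoeff x p.1 (by omega), hcoeff y p.2 (by omega)]
  let γB : A →* truncB C n :=
    { toFun := fun a => trPi C n (γP a)
      map_one' := hγone
      map_mul' := hγmul }
  have hprodtr : ∀ (s : Finset (Fin (m + 1))) (x : Fin (m + 1) → A),
      trPi C n (γP (∏ i ∈ s, x i)) = trPi C n (∏ i ∈ s, γP (x i)) := by
    intro s x
    calc trPi C n (γP (∏ i ∈ s, x i)) = γB (∏ i ∈ s, x i) := rfl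
    _ = ∏ i ∈ s, γB (x i) := map_prod γB x s
    _ = ∏ i ∈ s, trPi C n (γP (x i)) := rfl
    _ = trPi C n (∏ i ∈ s, γP (x i)) := (map_prod (trPi C n) _ s).symm
  refine ⟨?_, ?_, ?_⟩
  · intro x y
    dsimp only
    simp only [hmk]
    rw [← Finset.sum_add_distrib]
    refine Finset.sum_congr rfl fun i _ => ?_
    rw [hdadd, hDadd, add_tmul]
  · intro c x
    dsimp only
    simp only [hmk]
    have hγalg : γP (algebraMap k A c) = Polynomial.C (algebraMap k C c) := by
      rw [hγP]
      dsimp only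
      rw [Finset.sum_eq_single_of_mem 0 (Finset.mem_range.2 (by omega))]
      · rw [hd0_algebraMap, pow_zero, mul_one]
      · intro j hj hj0
        rw [hdvanish j (by omega) (by have := Finset.mem_range.1 hj; omega) c,
          map_zero, zero_mul]
    rw [hγsmul (algebraMap k A c), hγalg, map_sum]
    refine Finset.sum_congr rfl fun i _ => ?_
    rw [hdklin i c x, hDklin c (d i x), ← Polynomial.monomial_zero_left,
      smulP_monomial_tmul, zero_add]
  · intro x
    dsimp only
    simp only [hmk]
    rw [hbar (∏ i, x i),
      Phi_congr n hD0 (hprodtr Finset.univ x),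
      Phi_prod_eq n hD0 hDadd hDorder (fun i => γP (x i))]
    refine Finset.sum_congr rfl fun r _ => ?_
    congr 1
    refine Finset.sum_congr rfl fun S _ => ?_
    rw [hγsmul (∏ i ∈ S, x i), hbar (∏ i ∈ Finset.univ \ S, x i),
      smulP_congr n (hprodtr S x), Phi_congr n hD0 (hprodtr (Finset.univ \ S) x)]
end

section
/- Let A = K[x] over a field K of characteristic zero, and A_n = K[x_0, x_1, …, x_n] its Hasse-Schmidt algebra of order n ≥ 1 (with d_j(x) = x_j). For any m ≥ 2, the order-m derivation D = (1/m!) ∂^m/∂x_n^m : A_n → A_n satisfies D(d_i(x^l)) = 0 for all l ∈ ℕ and all 0 ≤ i ≤ n. In particular the induced map D̄ : A → A_n ⊗ B_n, a ↦ Σ_i D(d_i(a)) ⊗ t^i, is zero even though D ≠ 0. -/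
open TensorProduct

set_option synthInstance.maxHeartbeats 1000000
set_option maxHeartbeats 1000000

noncomputable def hsD (K : Type*) [CommRing K] (n i : ℕ) :
    Polynomial K → MvPolynomial (Fin (n + 1)) K :=
  fun f => Polynomial.coeff
    (Polynomial.aeval
      (∑ j : Fin (n + 1),
        Polynomial.C (MvPolynomial.X j : MvPolynomial (Fin (n + 1)) K) *
          Polynomial.X ^ (j : ℕ)) f) i

noncomputable def lastPartial (K : Type*) [Field K] (n m : ℕ) :
    MvPolynomial (Fin (n + 1)) K → MvPolynomial (Fin (n + 1)) K :=
  fun f => ((m.factorial : K))⁻¹ • (⇑(MvPolynomial.pderiv (Fin.last n)))^[m] f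

section Aux

open Polynomial MvPolynomial

variable (K : Type*) [CommRing K] (n : ℕ)

/-- the coefficient-wise derivation on `A_n[X]`. -/
noncomputable def pdPoly :
    Derivation K (Polynomial (MvPolynomial (Fin (n + 1)) K))
      (Polynomial (MvPolynomial (Fin (n + 1)) K)) :=
  PolynomialModule.equivPolynomialSelf.compDer (MvPolynomial.pderiv (Fin.last n)).mapCoeffs

lemma coeff_pdPoly (p : Polynomial (MvPolynomial (Fin (n + 1)) K)) (i : ℕ) :
    (pdPoly K n p).coeff i = MvPolynomial.pderiv (Fin.last n) (p.coeff i) := rfl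

/-- the universal element `P = ∑ x_j t^j`. -/
noncomputable def hsP : Polynomial (MvPolynomial (Fin (n + 1)) K) :=
  ∑ j : Fin (n + 1),
    Polynomial.C (MvPolynomial.X j : MvPolynomial (Fin (n + 1)) K) * Polynomial.X ^ (j : ℕ)

lemma coeff_hsP (k : ℕ) :
    (hsP K n).coeff k = ∑ j : Fin (n + 1),
      (MvPolynomial.X j : MvPolynomial (Fin (n + 1)) K) * (if k = (j : ℕ) then 1 else 0) := by
  simp [hsP, Polynomial.finset_sum_coeff, Polynomial.coeff_C_mul, Polynomial.coeff_X_pow]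

lemma coeff_hsP_zero : (hsP K n).coeff 0 = MvPolynomial.X 0 := by
  rw [coeff_hsP]
  rw [Finset.sum_eq_single (0 : Fin (n + 1))]
  · simp
  · intro j _ hj
    rw [if_neg, mul_zero]
    intro h
    exact hj (Fin.ext h.symm)
  · simp

lemma pdPoly_hsP : pdPoly K n (hsP K n) = Polynomial.X ^ n := by
  ext k
  rw [coeff_pdPoly, coeff_hsP, Polynomial.coeff_X_pow, map_sum]
  rw [Finset.sum_eq_single (Fin.last n)]
  · rcases eq_or_ne k n with h | h
    · simp [h, Fin.val_last, pderiv_X_self]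
    · rw [if_neg (by simpa [Fin.val_last] using h), if_neg h, mul_zero, map_zero]
  · intro j _ hj
    rcases eq_or_ne k (j : ℕ) with h | h
    · rw [if_pos h, mul_one, pderiv_X_of_ne hj]
    · simp [h]
  · simp

lemma pd_hsD_pow (l i : ℕ) (hi : i ≤ n) :
    MvPolynomial.pderiv (Fin.last n) (hsD K n i ((Polynomial.X : Polynomial K) ^ l)) =
      if i = n then l • (MvPolynomial.X 0 : MvPolynomial (Fin (n + 1)) K) ^ (l - 1) else 0 := by
  have h1 : hsD K n i ((Polynomial.X : Polynomial K) ^ l) = ((hsP K n) ^ l).coeff i := by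
    simp [hsD, hsP]
  rw [h1, ← coeff_pdPoly, Derivation.leibniz_pow, pdPoly_hsP, smul_eq_mul,
    Polynomial.coeff_smul, Polynomial.coeff_mul_X_pow']
  rcases eq_or_ne i n with h | h
  · subst h
    rw [if_pos le_rfl, if_pos rfl, Nat.sub_self]
    congr 1
    rw [← Polynomial.constantCoeff_apply, map_pow, Polynomial.constantCoeff_apply,
      coeff_hsP_zero]
  · rw [if_neg (lt_of_le_of_ne hi h).not_ge, smul_zero, if_neg h]

lemma pd2_hsD_pow (hn : 1 ≤ n) (l i : ℕ) (hi : i ≤ n) :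
    (⇑(MvPolynomial.pderiv (Fin.last n)))^[2]
      (hsD K n i ((Polynomial.X : Polynomial K) ^ l)) = 0 := by
  have h0 : (Fin.last n : Fin (n + 1)) ≠ 0 := by
    intro h
    have := congrArg Fin.val h
    simp [Fin.val_last] at this
    omega
  rw [Function.iterate_succ_apply, Function.iterate_one, pd_hsD_pow K n l i hi]
  rcases eq_or_ne i n with h | h
  · rw [if_pos h, map_nsmul, Derivation.leibniz_pow, pderiv_X_of_ne (Ne.symm h0)]
    simp
  · rw [if_neg h, map_zero]

end Aux

section Main

open Polynomial MvPolynomial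

variable (K : Type*) [Field K] (n m : ℕ)

/-- `lastPartial` as a linear map. -/
noncomputable def lastPartialL :
    MvPolynomial (Fin (n + 1)) K →ₗ[K] MvPolynomial (Fin (n + 1)) K :=
  ((m.factorial : K))⁻¹ • ((MvPolynomial.pderiv (Fin.last n)).toLinearMap ^ m)

lemma lastPartial_eq (f : MvPolynomial (Fin (n + 1)) K) :
    lastPartial K n m f = lastPartialL K n m f := by
  simp [lastPartial, lastPartialL, Module.End.pow_apply]

lemma lastPartial_zero_of (hm : 2 ≤ m) (f : MvPolynomial (Fin (n + 1)) K)
    (h : (⇑(MvPolynomial.pderiv (Fin.last n)))^[2] f = 0) :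
    lastPartial K n m f = 0 := by
  obtain ⟨k, rfl⟩ : ∃ k, m = k + 2 := ⟨m - 2, by omega⟩
  rw [lastPartial, Function.iterate_add_apply, h, Function.iterate_fixed (map_zero _),
    smul_zero]

end Main

/-- For `K` of characteristic zero, `A = K[x]`, `A_n = K[x_0,…,x_n]` with `n ≥ 1`,
and `m ≥ 2`, the order-`m` derivation `D = (1/m!) ∂^m/∂x_n^m` satisfies
`D(d_i(x^l)) = 0` for all `l` and all `i ≤ n`; in particular the induced map
`D̄ : A → A_n ⊗ B_n`, `a ↦ ∑_i D(d_i a) ⊗ t^i`, is zero, even though `D ≠ 0`. -/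
theorem lastPartial_kills_hsD
    (K : Type*) [Field K] [CharZero K] (n m : ℕ) (hn : 1 ≤ n) (hm : 2 ≤ m) :
    (∀ (l i : ℕ), i ≤ n →
      lastPartial K n m (hsD K n i ((Polynomial.X : Polynomial K) ^ l)) = 0) ∧
    (∀ f : Polynomial K,
      (∑ i ∈ Finset.range (n + 1),
        lastPartial K n m (hsD K n i f) ⊗ₜ[MvPolynomial (Fin (n + 1)) K]
          Ideal.Quotient.mk
            (Ideal.span {(Polynomial.X : Polynomial (MvPolynomial (Fin (n + 1)) K)) ^ (n + 1)})
            (Polynomial.X ^ i)) = 0) ∧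
    lastPartial K n m ≠ 0 := by
  have key : ∀ (l i : ℕ), i ≤ n →
      lastPartial K n m (hsD K n i ((Polynomial.X : Polynomial K) ^ l)) = 0 :=
    fun l i hi => lastPartial_zero_of K n m hm _ (pd2_hsD_pow K n hn l i hi)
  have keyf : ∀ (f : Polynomial K) (i : ℕ), i ≤ n →
      lastPartial K n m (hsD K n i f) = 0 := by
    intro f i hi
    induction f using Polynomial.induction_on' with
    | add p q hp hq =>
      have : hsD K n i (p + q) = hsD K n i p + hsD K n i q := by
        simp [hsD, Polynomial.coeff_add]
      rw [this, lastPartial_eq, map_add, ← lastPartial_eq, ← lastPartial_eq, hp, hq, add_zero]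
    | monomial l a =>
      have : hsD K n i (Polynomial.monomial l a) = a • hsD K n i (Polynomial.X ^ l) := by
        simp only [hsD, Polynomial.aeval_monomial, map_pow, Polynomial.aeval_X]
        rw [show (algebraMap K (Polynomial (MvPolynomial (Fin (n + 1)) K))) a
            = Polynomial.C (MvPolynomial.C a) from rfl,
          Polynomial.coeff_C_mul, MvPolynomial.smul_eq_C_mul]
      rw [this, lastPartial_eq, map_smul, ← lastPartial_eq, key l i hi, smul_zero]
  refine ⟨key, ?_, ?_⟩
  · intro f
    refine Finset.sum_eq_zero fun i hi => ?_
    rw [keyf f i (by simpa using Nat.lt_succ_iff.mp (Finset.mem_range.mp hi)), zero_tmul]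
  · intro h
    have hfact : ((m.factorial : K)) ≠ 0 := Nat.cast_ne_zero.mpr m.factorial_ne_zero
    set L := (MvPolynomial.pderiv (R := K) (σ := Fin (n + 1)) (Fin.last n)).toLinearMap with hL
    have hLapp : ∀ x, L x = MvPolynomial.pderiv (Fin.last n) x := fun _ => rfl
    have hiter : ∀ k : ℕ, (L ^ k)
        ((MvPolynomial.X (Fin.last n) : MvPolynomial (Fin (n + 1)) K) ^ k)
        = (k.factorial : MvPolynomial (Fin (n + 1)) K) := by
      intro k
      induction k with
      | zero => simp
      | succ k ih =>
        rw [pow_succ, Module.End.mul_apply, hLapp, Derivation.leibniz_pow,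
          MvPolynomial.pderiv_X_self, Nat.add_sub_cancel, smul_eq_mul, mul_one,
          map_nsmul, ih]
        rw [nsmul_eq_mul, Nat.factorial_succ]
        push_cast
        ring
    have hval : lastPartial K n m ((MvPolynomial.X (Fin.last n) : MvPolynomial (Fin (n + 1)) K) ^ m)
        = 1 := by
      rw [lastPartial]
      have : (⇑(MvPolynomial.pderiv (R := K) (Fin.last n)))^[m]
          ((MvPolynomial.X (Fin.last n) : MvPolynomial (Fin (n + 1)) K) ^ m)
          = (L ^ m) ((MvPolynomial.X (Fin.last n) : MvPolynomial (Fin (n + 1)) K) ^ m) :=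
        (Module.End.pow_apply L m _).symm
      rw [this, hiter m]
      rw [show ((m.factorial : ℕ) : MvPolynomial (Fin (n + 1)) K)
          = MvPolynomial.C ((m.factorial : ℕ) : K) from
          (map_natCast MvPolynomial.C m.factorial).symm, MvPolynomial.smul_eq_C_mul, ← map_mul, inv_mul_cancel₀ hfact, map_one]
    have : (1 : MvPolynomial (Fin (n + 1)) K) = 0 := by
      rw [← hval, h]; rfl
    exact one_ne_zero this
end

section
/- Let A = K[x_1,…,x_s] over a field K of characteristic zero and let d_A^2 : A → Ω_{A/K}^{(2)} = I_A/I_A^3 be the canonical second-order differential. For every monomial x^β one has d_A^2(x^β) = Σ_{|α|=2} (1/α!) (∂^α x^β/∂x^α) d_A^2(x^α) + (2 − |β|) Σ_{|α|=1} (1/α!) (∂^α x^β/∂x^α) d_A^2(x^α), where the sums range over α ∈ ℕ^s. -/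
open TensorProduct

/-- Iterated partial derivative `∂^α/∂x^α` on a multivariate polynomial ring. -/
noncomputable def multiPD {σ : Type*} [Fintype σ] [DecidableEq σ] {K : Type*} [CommSemiring K]
    (α : σ → ℕ) : MvPolynomial σ K → MvPolynomial σ K :=
  fun f => Finset.univ.toList.foldr
    (fun i g => (⇑(MvPolynomial.pderiv (R := K) i))^[α i] g) f

/-- The canonical second-order differential `d_A^2 : A → (A ⊗ A)/I_A^3`,
`a ↦ 1 ⊗ a − a ⊗ 1 mod I_A^3` (the module `Ω^{(2)}_{A/K} = I_A/I_A^3` sits inside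
this quotient ring). -/
noncomputable def dA2 (K : Type*) (A : Type*) [CommRing K] [CommRing A] [Algebra K A]
    (a : A) : (A ⊗[K] A) ⧸ (KaehlerDifferential.ideal K A ^ 3) :=
  Ideal.Quotient.mk _ ((1 : A) ⊗ₜ[K] a - a ⊗ₜ[K] (1 : A))

/-- The `A`-module structure on `(A ⊗ A)/I_A^3` via the left factor:
multiplication by `a ⊗ 1`. -/
noncomputable def iotaL (K : Type*) (A : Type*) [CommRing K] [CommRing A] [Algebra K A]
    (a : A) : (A ⊗[K] A) ⧸ (KaehlerDifferential.ideal K A ^ 3) :=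
  Ideal.Quotient.mk _ (a ⊗ₜ[K] (1 : A))


open MvPolynomial

set_option synthInstance.maxHeartbeats 1000000
set_option maxHeartbeats 2000000

section Basic
variable (K A : Type*) [CommRing K] [CommRing A] [Algebra K A]

/-- `iotaL` as a ring hom. -/
noncomputable def iotaHom : A →+* (A ⊗[K] A) ⧸ (KaehlerDifferential.ideal K A ^ 3) :=
  (Ideal.Quotient.mk _).comp (Algebra.TensorProduct.includeLeftRingHom)

lemma iotaL_eq (a : A) : iotaL K A a = iotaHom K A a := rfl

lemma dA2_add (a b : A) : dA2 K A (a + b) = dA2 K A a + dA2 K A b := by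
  unfold dA2; rw [← map_add]; congr 1
  rw [tmul_add, add_tmul]; ring

lemma dA2_smul (r : K) (a : A) : dA2 K A (r • a) = r • dA2 K A a := by
  unfold dA2
  rw [tmul_smul, ← smul_tmul', ← smul_sub]
  exact map_smul (Ideal.Quotient.mkₐ K _) r _

lemma dA2_algebraMap (r : K) : dA2 K A (algebraMap K A r) = 0 := by
  unfold dA2
  rw [Algebra.algebraMap_eq_smul_one, tmul_smul, ← smul_tmul', sub_self, map_zero]

lemma dA2_mul (a b : A) : dA2 K A (a * b) =
    iotaL K A a * dA2 K A b + iotaL K A b * dA2 K A a + dA2 K A a * dA2 K A b := by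
  unfold dA2 iotaL
  rw [← map_mul, ← map_mul, ← map_mul, ← map_add, ← map_add]
  congr 1
  simp only [mul_sub, sub_mul, Algebra.TensorProduct.tmul_mul_tmul, one_mul, mul_one]
  ring

lemma dA2_triple (a b c : A) : dA2 K A a * dA2 K A b * dA2 K A c = 0 := by
  unfold dA2
  rw [← map_mul, ← map_mul, Ideal.Quotient.eq_zero_iff_mem, pow_succ, sq]
  exact Ideal.mul_mem_mul
    (Ideal.mul_mem_mul (KaehlerDifferential.one_smul_sub_smul_one_mem_ideal K a)
      (KaehlerDifferential.one_smul_sub_smul_one_mem_ideal K b))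
    (KaehlerDifferential.one_smul_sub_smul_one_mem_ideal K c)

lemma iotaL_smul (r : K) (a : A) : iotaL K A (r • a) = r • iotaL K A a := by
  unfold iotaL
  rw [← smul_tmul']
  exact map_smul (Ideal.Quotient.mkₐ K _) r _

end Basic

section PD
variable {σ : Type*} [Fintype σ] [DecidableEq σ] {K : Type*} [CommSemiring K]

omit [Fintype σ] in
lemma pderiv_comm (a b : σ) (f : MvPolynomial σ K) :
    pderiv a (pderiv b f) = pderiv b (pderiv a f) := by
  induction f using MvPolynomial.induction_on' with
  | monomial u c =>
    rcases eq_or_ne a b with rfl | hab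
    · rfl
    · simp only [pderiv_monomial]
      congr 1
      · rw [tsub_tsub, tsub_tsub, add_comm]
      · rw [Finsupp.tsub_apply, Finsupp.tsub_apply,
          Finsupp.single_eq_of_ne' hab, Finsupp.single_eq_of_ne' (Ne.symm hab)]
        simp only [Nat.sub_zero]
        ring
  | add p q hp hq => simp [map_add, hp, hq]


omit [Fintype σ] in
private lemma foldr_congr (α α' : σ → ℕ) (l : List σ) (h : ∀ i ∈ l, α i = α' i)
    (f : MvPolynomial σ K) :
    l.foldr (fun i g => (⇑(pderiv (R := K) i))^[α i] g) f
      = l.foldr (fun i g => (⇑(pderiv (R := K) i))^[α' i] g) f := by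
  induction l with
  | nil => rfl
  | cons i t ih =>
    simp only [List.foldr_cons]
    rw [h i List.mem_cons_self, ih fun j hj => h j (List.mem_cons_of_mem _ hj)]

omit [Fintype σ] in
private lemma foldr_single_add (α : σ → ℕ) (j : σ) (l : List σ) (hl : l.Nodup) (hj : j ∈ l)
    (f : MvPolynomial σ K) :
    l.foldr (fun i g => (⇑(pderiv (R := K) i))^[(fun i' => (Pi.single j 1 : σ → ℕ) i' + α i') i] g) f
      = pderiv j (l.foldr (fun i g => (⇑(pderiv (R := K) i))^[α i] g) f) := by
  induction l with
  | nil => simp at hj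
  | cons i t ih =>
    simp only [List.foldr_cons]
    rcases List.nodup_cons.mp hl with ⟨hit, ht⟩
    rcases eq_or_ne i j with rfl | hij
    · have h1 : (Pi.single i 1 : σ → ℕ) i + α i = α i + 1 := by simp [add_comm]
      rw [h1, foldr_congr (fun i' => (Pi.single i 1 : σ → ℕ) i' + α i') α t
          (fun j' hj' => by
            have : j' ≠ i := fun h => hit (h ▸ hj')
            simp [Pi.single_apply, this])]
      rw [Function.iterate_succ_apply']
    · have hjt : j ∈ t := by
        rcases List.mem_cons.mp hj with h | h
        · exact absurd h.symm hij
        · exact h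
      have h1 : (Pi.single j 1 : σ → ℕ) i + α i = α i := by
        simp [Pi.single_apply, hij]
      rw [h1, ih ht hjt]
      have key : ∀ (n : ℕ) (g : MvPolynomial σ K),
          (⇑(pderiv (R := K) i))^[n] (pderiv j g) = pderiv j ((⇑(pderiv (R := K) i))^[n] g) := by
        intro n
        induction n with
        | zero => intro g; rfl
        | succ n ihn =>
          intro g
          rw [Function.iterate_succ_apply, Function.iterate_succ_apply, pderiv_comm i j g, ihn]
      exact key (α i) _

lemma multiPD_zero (f : MvPolynomial σ K) : multiPD (0 : σ → ℕ) f = f := by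
  unfold multiPD
  generalize (Finset.univ : Finset σ).toList = l
  induction l with
  | nil => rfl
  | cons i t ih => rw [List.foldr_cons, Pi.zero_apply, Function.iterate_zero_apply, ih]

lemma multiPD_single_add (α : σ → ℕ) (j : σ) (f : MvPolynomial σ K) :
    multiPD (fun i => (Pi.single j 1 : σ → ℕ) i + α i) f = pderiv j (multiPD α f) :=
  foldr_single_add α j _ (Finset.nodup_toList _) (Finset.mem_toList.mpr (Finset.mem_univ j)) f

lemma multiPD_single (j : σ) (f : MvPolynomial σ K) :
    multiPD (Pi.single j 1) f = pderiv j f := by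
  have : (Pi.single j 1 : σ → ℕ) = fun i => (Pi.single j 1 : σ → ℕ) i + (0 : σ → ℕ) i := by
    funext i; simp
  rw [this, multiPD_single_add, multiPD_zero]

lemma multiPD_pair (j k : σ) (f : MvPolynomial σ K) :
    multiPD (fun i => (Pi.single j 1 : σ → ℕ) i + (Pi.single k 1 : σ → ℕ) i) f = pderiv j (pderiv k f) := by
  rw [multiPD_single_add, multiPD_single]

end PD

section Euler
variable {σ : Type*} [Fintype σ] [DecidableEq σ] {K : Type*} [CommSemiring K]

omit [Fintype σ] in
lemma pderiv_prod_eq_zero (j : σ) (t : Finset σ) (hj : j ∉ t) (β : σ → ℕ) :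
    pderiv j (∏ i ∈ t, (X i : MvPolynomial σ K) ^ β i) = 0 := by
  classical
  induction t using Finset.induction_on with
  | empty => simp [pderiv_one]
  | @insert a tt ha ih =>
    have hja : a ≠ j := fun h => hj (h ▸ Finset.mem_insert_self a tt)
    have hjt : j ∉ tt := fun h => hj (Finset.mem_insert_of_mem h)
    rw [Finset.prod_insert ha, pderiv_mul, pderiv_pow, pderiv_X_of_ne hja, ih hjt]
    ring

lemma theta_pow (a : σ) (n : ℕ) :
    ∑ k, X k * pderiv k ((X a : MvPolynomial σ K) ^ n) = n • (X a : MvPolynomial σ K) ^ n := by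
  cases n with
  | zero => simp [pderiv_one]
  | succ n =>
    rw [Finset.sum_eq_single a]
    · simp only [pderiv_pow, pderiv_X_self, mul_one, Nat.add_sub_cancel, nsmul_eq_mul]
      push_cast
      ring
    · intro b _ hba
      rw [pderiv_pow, pderiv_X_of_ne (Ne.symm hba)]
      ring
    · intro h; exact absurd (Finset.mem_univ a) h

lemma theta_prod (t : Finset σ) (β : σ → ℕ) :
    ∑ k, X k * pderiv k (∏ i ∈ t, (X i : MvPolynomial σ K) ^ β i)
      = (∑ i ∈ t, β i) • ∏ i ∈ t, (X i : MvPolynomial σ K) ^ β i := by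
  classical
  induction t using Finset.induction_on with
  | empty => simp [pderiv_one]
  | @insert a tt ha ih =>
    have h1 : ∑ k, X k * (pderiv k ((X a : MvPolynomial σ K) ^ β a) * ∏ i ∈ tt, X i ^ β i)
        = (∑ k, X k * pderiv k ((X a : MvPolynomial σ K) ^ β a)) * ∏ i ∈ tt, X i ^ β i := by
      rw [Finset.sum_mul]; exact Finset.sum_congr rfl fun k _ => (mul_assoc _ _ _).symm
    have h2 : ∑ k, X k * ((X a : MvPolynomial σ K) ^ β a * pderiv k (∏ i ∈ tt, X i ^ β i))
        = (X a : MvPolynomial σ K) ^ β a * ∑ k, X k * pderiv k (∏ i ∈ tt, X i ^ β i) := by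
      rw [Finset.mul_sum]; exact Finset.sum_congr rfl fun k _ => mul_left_comm _ _ _
    rw [Finset.prod_insert ha, Finset.sum_insert ha]
    simp only [pderiv_mul, mul_add]
    rw [Finset.sum_add_distrib, h1, h2, theta_pow, ih, smul_mul_assoc, mul_smul_comm, add_smul]

lemma pderiv_prod_univ (β : σ → ℕ) (j : σ) :
    pderiv j (∏ i, (X i : MvPolynomial σ K) ^ β i)
      = β j • ((X j : MvPolynomial σ K) ^ (β j - 1) * ∏ i ∈ Finset.univ.erase j, X i ^ β i) := by
  rw [← Finset.mul_prod_erase Finset.univ _ (Finset.mem_univ j), pderiv_mul,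
    pderiv_prod_eq_zero j _ (Finset.notMem_erase j _) β, mul_zero, add_zero,
    pderiv_pow, pderiv_X_self, mul_one, nsmul_eq_mul]
  ring

lemma update_prod (β : σ → ℕ) (j : σ) :
    ∏ i, (X i : MvPolynomial σ K) ^ (Function.update β j (β j - 1)) i
      = (X j : MvPolynomial σ K) ^ (β j - 1) * ∏ i ∈ Finset.univ.erase j, X i ^ β i := by
  rw [← Finset.mul_prod_erase Finset.univ
    (fun i => (X i : MvPolynomial σ K) ^ (Function.update β j (β j - 1)) i) (Finset.mem_univ j),
    Function.update_self]
  congr 1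
  exact Finset.prod_congr rfl fun i hi => by
    rw [Function.update_of_ne (Finset.ne_of_mem_erase hi)]

lemma euler (β : σ → ℕ) (j : σ) :
    (∑ k, X k * pderiv k (pderiv j (∏ i, (X i : MvPolynomial σ K) ^ β i)))
        + pderiv j (∏ i, (X i : MvPolynomial σ K) ^ β i)
      = (∑ i, β i) • pderiv j (∏ i, (X i : MvPolynomial σ K) ^ β i) := by
  rcases Nat.eq_zero_or_pos (β j) with h0 | hpos
  · rw [pderiv_prod_univ (K := K) β j, h0, zero_smul]
    simp
  · have hn : 1 ≤ ∑ i, β i :=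
      le_trans hpos (Finset.single_le_sum (fun i _ => Nat.zero_le (β i)) (Finset.mem_univ j))
    have hsum' : ∑ i, (Function.update β j (β j - 1)) i = (∑ i, β i) - 1 := by
      rw [Finset.sum_update_of_mem (Finset.mem_univ j),
        ← Finset.add_sum_erase Finset.univ β (Finset.mem_univ j), Finset.erase_eq]
      omega
    rw [pderiv_prod_univ (K := K) β j, ← update_prod (K := K) β j]
    have hc : ∀ k, X k * pderiv k
          (β j • ∏ i, (X i : MvPolynomial σ K) ^ (Function.update β j (β j - 1)) i)
        = β j • (X k * pderiv k (∏ i, (X i : MvPolynomial σ K) ^ (Function.update β j (β j - 1)) i)) :=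
      fun k => by rw [map_nsmul, mul_smul_comm]
    simp only [hc]
    rw [← Finset.smul_sum, theta_prod, hsum', smul_smul, smul_smul, ← add_nsmul,
      ← Nat.mul_succ, Nat.succ_eq_add_one, Nat.sub_add_cancel hn, mul_comm]
end Euler
section Comb
variable {s : ℕ}

/-- `φ (j,k) = e_j + e_k`. -/
def dphi (s : ℕ) (p : Fin s × Fin s) : Fin s → ℕ :=
  fun i => (Pi.single p.1 1 : Fin s → ℕ) i + (Pi.single p.2 1 : Fin s → ℕ) i

lemma single_sum (j : Fin s) : ∑ i, (Pi.single j 1 : Fin s → ℕ) i = 1 := by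
  rw [Finset.sum_eq_single j (fun i _ hij => Pi.single_eq_of_ne hij 1)
    (fun h => absurd (Finset.mem_univ j) h), Pi.single_eq_same]

lemma dphi_sum (p : Fin s × Fin s) : ∑ i, dphi s p i = 2 := by
  unfold dphi
  rw [Finset.sum_add_distrib, single_sum, single_sum]

lemma dphi_eq_iff {a b j k : Fin s} :
    dphi s (a, b) = dphi s (j, k) ↔ (a = j ∧ b = k) ∨ (a = k ∧ b = j) := by
  have h : dphi s (a, b) = dphi s (j, k) ↔
      (Pi.single a 1 + Pi.single b 1 : Fin s → ℕ) = Pi.single j 1 + Pi.single k 1 := Iff.rfl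
  rw [h, Pi.single_add_single_eq_single_add_single (one_ne_zero) (one_ne_zero)]
  constructor
  · rintro (h | ⟨-, h1, h2⟩ | ⟨h, -⟩)
    · exact Or.inl h
    · exact Or.inr ⟨h1, h2⟩
    · omega
  · rintro (h | h)
    · exact Or.inl h
    · exact Or.inr (Or.inl ⟨rfl, h.1, h.2⟩)

lemma classify1 {α : Fin s → ℕ} (h : ∑ i, α i = 1) : ∃ j, α = Pi.single j 1 := by
  have h0 : ∃ j, α j ≠ 0 := by
    by_contra hc; push_neg at hc
    rw [Finset.sum_eq_zero fun i _ => hc i] at h; omega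
  obtain ⟨j, hj⟩ := h0
  have hsplit : α j + ∑ i ∈ Finset.univ.erase j, α i = 1 := by
    rw [Finset.add_sum_erase _ _ (Finset.mem_univ j)]; exact h
  have hrest : ∀ i ∈ Finset.univ.erase j, α i = 0 := by
    intro i hi
    have := Finset.single_le_sum (f := α) (fun i _ => Nat.zero_le _) hi
    omega
  refine ⟨j, funext fun i => ?_⟩
  by_cases hij : i = j
  · subst hij; rw [Pi.single_eq_same]; omega
  · rw [Pi.single_eq_of_ne hij]
    exact hrest i (Finset.mem_erase.mpr ⟨hij, Finset.mem_univ i⟩)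

lemma classify2 {α : Fin s → ℕ} (h : ∑ i, α i = 2) : ∃ p : Fin s × Fin s, α = dphi s p := by
  have h0 : ∃ j, α j ≠ 0 := by
    by_contra hc; push_neg at hc
    rw [Finset.sum_eq_zero fun i _ => hc i] at h; omega
  obtain ⟨j, hj⟩ := h0
  have hsplit : α j + ∑ i ∈ Finset.univ.erase j, α i = 2 := by
    rw [Finset.add_sum_erase _ _ (Finset.mem_univ j)]; exact h
  have hle : α j ≤ 2 := by omega
  rcases (by omega : α j = 2 ∨ α j = 1) with h2 | h1
  · have hrest : ∀ i ∈ Finset.univ.erase j, α i = 0 := by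
      intro i hi
      have := Finset.single_le_sum (f := α) (fun i _ => Nat.zero_le _) hi
      omega
    refine ⟨(j, j), funext fun i => ?_⟩
    unfold dphi
    by_cases hij : i = j
    · subst hij; rw [Pi.single_eq_same]; omega
    · rw [Pi.single_eq_of_ne hij]
      have := hrest i (Finset.mem_erase.mpr ⟨hij, Finset.mem_univ i⟩)
      omega
  · have hrest : ∑ i ∈ Finset.univ.erase j, α i = 1 := by omega
    have h0' : ∃ k, k ∈ Finset.univ.erase j ∧ α k ≠ 0 := by
      by_contra hc; push_neg at hc
      rw [Finset.sum_eq_zero fun i hi => hc i hi] at hrest; omega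
    obtain ⟨k, hk, hk0⟩ := h0'
    have hkj : k ≠ j := Finset.ne_of_mem_erase hk
    have hsplit2 : α k + ∑ i ∈ (Finset.univ.erase j).erase k, α i = 1 := by
      rw [Finset.add_sum_erase _ _ hk]; exact hrest
    have hrest2 : ∀ i ∈ (Finset.univ.erase j).erase k, α i = 0 := by
      intro i hi
      have := Finset.single_le_sum (f := α) (fun i _ => Nat.zero_le _) hi
      omega
    refine ⟨(j, k), funext fun i => ?_⟩
    unfold dphi
    by_cases hij : i = j
    · subst hij
      rw [Pi.single_eq_same, Pi.single_eq_of_ne (Ne.symm hkj)]; omega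
    · by_cases hik : i = k
      · subst hik
        rw [Pi.single_eq_of_ne hkj, Pi.single_eq_same]; omega
      · rw [Pi.single_eq_of_ne hij, Pi.single_eq_of_ne hik]
        have := hrest2 i (Finset.mem_erase.mpr ⟨hik,
          Finset.mem_erase.mpr ⟨hij, Finset.mem_univ i⟩⟩)
        omega

lemma adt1_eq : Finset.Nat.antidiagonalTuple s 1
    = Finset.univ.image (fun j : Fin s => (Pi.single j 1 : Fin s → ℕ)) := by
  ext α
  rw [Finset.Nat.mem_antidiagonalTuple, Finset.mem_image]
  constructor
  · intro h
    obtain ⟨j, hj⟩ := classify1 h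
    exact ⟨j, Finset.mem_univ j, hj.symm⟩
  · rintro ⟨j, -, rfl⟩
    exact single_sum j

lemma single_inj {j k : Fin s} (h : (Pi.single j 1 : Fin s → ℕ) = Pi.single k 1) : j = k := by
  by_contra hjk
  have := congrFun h j
  rw [Pi.single_eq_same, Pi.single_eq_of_ne hjk] at this
  omega

lemma single_factorial_prod (j : Fin s) :
    ∏ i, ((Pi.single j 1 : Fin s → ℕ) i).factorial = 1 := by
  apply Finset.prod_eq_one
  intro i _
  by_cases hij : i = j
  · subst hij; rw [Pi.single_eq_same]; rfl
  · rw [Pi.single_eq_of_ne hij]; rfl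

lemma dphi_factorial_card (j k : Fin s) :
    (Finset.univ.filter (fun p : Fin s × Fin s => dphi s p = dphi s (j, k))).card
      * ∏ i, (dphi s (j, k) i).factorial = 2 := by
  have hfilter : Finset.univ.filter (fun p : Fin s × Fin s => dphi s p = dphi s (j, k))
      = {(j, k), (k, j)} := by
    ext p
    rw [Finset.mem_filter, Finset.mem_insert, Finset.mem_singleton]
    constructor
    · rintro ⟨-, hp⟩
      obtain ⟨a, b⟩ := p
      rcases dphi_eq_iff.mp hp with ⟨h1, h2⟩ | ⟨h1, h2⟩
      · exact Or.inl (by rw [h1, h2])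
      · exact Or.inr (by rw [h1, h2])
    · rintro (rfl | rfl)
      · exact ⟨Finset.mem_univ _, rfl⟩
      · exact ⟨Finset.mem_univ _, dphi_eq_iff.mpr (Or.inr ⟨rfl, rfl⟩)⟩
  rw [hfilter]
  rcases eq_or_ne j k with rfl | hjk
  · have hcard : ({(j, j), (j, j)} : Finset (Fin s × Fin s)).card = 1 := by simp
    rw [hcard, one_mul]
    rw [Finset.prod_eq_single j (fun i _ hij => by
        unfold dphi; rw [Pi.single_eq_of_ne hij]; rfl)
      (fun h => absurd (Finset.mem_univ j) h)]
    unfold dphi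
    rw [Pi.single_eq_same]; rfl
  · have hcard : ({(j, k), (k, j)} : Finset (Fin s × Fin s)).card = 2 := by
      rw [Finset.card_insert_of_notMem (by simp [Prod.ext_iff, hjk]), Finset.card_singleton]
    rw [hcard]
    have hprod : ∏ i, (dphi s (j, k) i).factorial = 1 := by
      apply Finset.prod_eq_one
      intro i _
      unfold dphi
      by_cases hij : i = j
      · subst hij; rw [Pi.single_eq_same, Pi.single_eq_of_ne hjk]; rfl
      · by_cases hik : i = k
        · subst hik; rw [Pi.single_eq_of_ne hij, Pi.single_eq_same]; rfl
        · rw [Pi.single_eq_of_ne hij, Pi.single_eq_of_ne hik]; rfl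
    rw [hprod]

lemma adt2_eq : Finset.Nat.antidiagonalTuple s 2
    = Finset.univ.image (dphi s) := by
  ext α
  rw [Finset.Nat.mem_antidiagonalTuple, Finset.mem_image]
  constructor
  · intro h
    obtain ⟨p, hp⟩ := classify2 h
    exact ⟨p, Finset.mem_univ p, hp.symm⟩
  · rintro ⟨p, -, rfl⟩
    exact dphi_sum p

variable {K : Type*} [Field K] [CharZero K] {M : Type*} [AddCommMonoid M] [Module K M]

lemma sumW1 (G : (Fin s → ℕ) → M) :
    ∑ α ∈ Finset.Nat.antidiagonalTuple s 1, ((∏ i, (α i).factorial : ℕ) : K)⁻¹ • G α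
      = ∑ j, G (Pi.single j 1) := by
  rw [adt1_eq, Finset.sum_image (fun j _ k _ h => single_inj h)]
  apply Finset.sum_congr rfl
  intro j _
  rw [single_factorial_prod, Nat.cast_one, inv_one, one_smul]

lemma sumW2 (G : (Fin s → ℕ) → M) :
    ∑ α ∈ Finset.Nat.antidiagonalTuple s 2, ((∏ i, (α i).factorial : ℕ) : K)⁻¹ • G α
      = (2 : K)⁻¹ • ∑ p : Fin s × Fin s, G (dphi s p) := by
  rw [Finset.sum_comp G (dphi s), ← adt2_eq, Finset.smul_sum]
  apply Finset.sum_congr rfl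
  intro α hα
  obtain ⟨p, hp⟩ := classify2 (Finset.Nat.mem_antidiagonalTuple.mp hα)
  obtain ⟨j, k⟩ := p
  subst hp
  have hcard := dphi_factorial_card j k
  rw [← Nat.cast_smul_eq_nsmul K, smul_smul]
  congr 1
  have hp : ((∏ i, (dphi s (j, k) i).factorial : ℕ) : K) ≠ 0 :=
    Nat.cast_ne_zero.mpr (Finset.prod_pos fun i _ => Nat.factorial_pos _).ne'
  have h2 : ((Finset.univ.filter (fun p : Fin s × Fin s => dphi s p = dphi s (j, k))).card : K)
      * ((∏ i, (dphi s (j, k) i).factorial : ℕ) : K) = 2 := by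
    exact_mod_cast congrArg (Nat.cast : ℕ → K) hcard
  have h3 : ((2 : K)⁻¹
        * (Finset.univ.filter (fun p : Fin s × Fin s => dphi s p = dphi s (j, k))).card)
      * ((∏ i, (dphi s (j, k) i).factorial : ℕ) : K) = 1 := by
    rw [mul_assoc, h2, inv_mul_cancel₀ (two_ne_zero)]
  exact (eq_inv_of_mul_eq_one_left h3).symm

end Comb

section Taylor
variable {K : Type*} [Field K] [CharZero K] {s : ℕ}

local notation "A" => MvPolynomial (Fin s) K

lemma inv_two_smul_add {M : Type*} [AddCommMonoid M] [Module K M] (z : M) :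
    (2 : K)⁻¹ • (z + z) = z := by
  rw [← two_smul K z, smul_smul, inv_mul_cancel₀ (two_ne_zero), one_smul]

set_option maxHeartbeats 2000000 in
lemma taylor2 (f : A) :
    dA2 K A f = (∑ j, iotaL K A (pderiv j f) * dA2 K A (X j))
      + (2 : K)⁻¹ • ∑ p : Fin s × Fin s,
          iotaL K A (pderiv p.1 (pderiv p.2 f)) * (dA2 K A (X p.1) * dA2 K A (X p.2)) := by
  induction f using MvPolynomial.induction_on with
  | C r =>
    rw [show (C r : A) = algebraMap K A r from rfl, dA2_algebraMap]
    simp [pderiv_C, iotaL_eq, map_zero]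
  | add p q hp hq =>
    rw [dA2_add, hp, hq]
    simp only [map_add, iotaL_eq, add_mul, Finset.sum_add_distrib, smul_add]
    abel
  | mul_X f n ih =>
    have hD1 : ∀ j : Fin s, pderiv j (f * X n)
        = pderiv j f * X n + f * (if n = j then 1 else 0) := by
      intro j
      rw [pderiv_mul, pderiv_X, Pi.single_apply]
    have hD2 : ∀ a b : Fin s, pderiv a (pderiv b (f * X n))
        = pderiv a (pderiv b f) * X n + pderiv b f * (if n = a then 1 else 0)
          + pderiv a f * (if n = b then 1 else 0) := by
      intro a b
      rw [hD1 b, map_add, pderiv_mul, pderiv_X, Pi.single_apply, pderiv_mul]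
      rcases eq_or_ne n b with rfl | hb
      · simp only [eq_self_iff_true, if_true, pderiv_one, mul_zero, add_zero, mul_one]
      · simp only [if_neg hb, map_zero, mul_zero, add_zero]
    rw [dA2_mul, ih]
    have htriple : (∑ j, iotaL K A (pderiv j f) * dA2 K A (X j)
        + (2:K)⁻¹ • ∑ p : Fin s × Fin s, iotaL K A (pderiv p.1 (pderiv p.2 f))
            * (dA2 K A (X p.1) * dA2 K A (X p.2))) * dA2 K A (X n)
        = ∑ j, iotaL K A (pderiv j f) * (dA2 K A (X j) * dA2 K A (X n)) := by
      rw [add_mul, smul_mul_assoc, Finset.sum_mul, Finset.sum_mul]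
      have hz : ∑ p : Fin s × Fin s, iotaL K A (pderiv p.1 (pderiv p.2 f))
          * (dA2 K A (X p.1) * dA2 K A (X p.2)) * dA2 K A (X n) = 0 := by
        refine Finset.sum_eq_zero fun p _ => ?_
        rw [mul_assoc, dA2_triple, mul_zero]
      rw [hz, smul_zero, add_zero]
      exact Finset.sum_congr rfl fun j _ => mul_assoc _ _ _
    have hFirst : ∑ j, iotaL K A (pderiv j (f * X n)) * dA2 K A (X j)
        = iotaL K A (X n) * ∑ j, iotaL K A (pderiv j f) * dA2 K A (X j)
          + iotaL K A f * dA2 K A (X n) := by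
      simp only [hD1, iotaL_eq, map_add, map_mul, add_mul]
      rw [Finset.sum_add_distrib]
      congr 1
      · rw [Finset.mul_sum]
        refine Finset.sum_congr rfl fun j _ => by ring
      · have hco : ∀ j : Fin s, iotaHom K A f * iotaHom K A (if n = j then 1 else 0)
            * dA2 K A (X j)
            = if n = j then iotaHom K A f * dA2 K A (X j) else 0 := fun j => by
          rcases eq_or_ne n j with rfl | h
          · rw [if_pos rfl, if_pos rfl, map_one, mul_one]
          · rw [if_neg h, if_neg h, map_zero, mul_zero, zero_mul]
        simp only [hco]
        rw [Finset.sum_ite_eq]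
        simp
    have hSecond : ∑ p : Fin s × Fin s, iotaL K A (pderiv p.1 (pderiv p.2 (f * X n)))
          * (dA2 K A (X p.1) * dA2 K A (X p.2))
        = iotaL K A (X n) * ∑ p : Fin s × Fin s, iotaL K A (pderiv p.1 (pderiv p.2 f))
            * (dA2 K A (X p.1) * dA2 K A (X p.2))
          + ((∑ j, iotaL K A (pderiv j f) * (dA2 K A (X j) * dA2 K A (X n)))
            + ∑ j, iotaL K A (pderiv j f) * (dA2 K A (X j) * dA2 K A (X n))) := by
      simp only [hD2, iotaL_eq, map_add, map_mul, add_mul]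
      rw [Finset.sum_add_distrib, Finset.sum_add_distrib, add_assoc]
      congr 1
      · rw [Finset.mul_sum]
        exact Finset.sum_congr rfl fun p _ => by ring
      congr 1
      · -- middle term: collapses over first coordinate
        rw [Fintype.sum_prod_type]
        have hco : ∀ a : Fin s, (∑ b, iotaHom K A (pderiv b f)
              * iotaHom K A (if n = a then 1 else 0) * (dA2 K A (X a) * dA2 K A (X b)))
            = if n = a then ∑ b, iotaHom K A (pderiv b f)
                * (dA2 K A (X b) * dA2 K A (X n)) else 0 := fun a => by
          rcases eq_or_ne n a with rfl | h
          · rw [if_pos rfl, if_pos rfl]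
            refine Finset.sum_congr rfl fun b _ => ?_
            rw [map_one, mul_one]
            ring
          · rw [if_neg h, if_neg h]
            exact Finset.sum_eq_zero fun b _ => by rw [map_zero, mul_zero, zero_mul]
        simp only [hco]
        rw [Finset.sum_ite_eq]
        simp
      · -- last term: collapses over second coordinate
        rw [Fintype.sum_prod_type]
        have hco : ∀ a : Fin s, (∑ b, iotaHom K A (pderiv a f)
              * iotaHom K A (if n = b then 1 else 0) * (dA2 K A (X a) * dA2 K A (X b)))
            = iotaHom K A (pderiv a f) * (dA2 K A (X a) * dA2 K A (X n)) := fun a => by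
          have hco2 : ∀ b : Fin s, iotaHom K A (pderiv a f)
                * iotaHom K A (if n = b then 1 else 0) * (dA2 K A (X a) * dA2 K A (X b))
              = if n = b then iotaHom K A (pderiv a f)
                  * (dA2 K A (X a) * dA2 K A (X n)) else 0 := fun b => by
            rcases eq_or_ne n b with rfl | h
            · rw [if_pos rfl, if_pos rfl, map_one, mul_one]
            · rw [if_neg h, if_neg h, map_zero, mul_zero, zero_mul]
          simp only [hco2]
          rw [Finset.sum_ite_eq]
          simp
        simp only [hco]
    rw [htriple, hFirst, hSecond, mul_add, smul_add, inv_two_smul_add, ← mul_smul_comm]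
    abel
end Taylor

section Main
variable {K : Type*} [Field K] [CharZero K] {s : ℕ}

local notation "A" => MvPolynomial (Fin s) K

lemma prod_X_pow_single (j : Fin s) :
    (∏ i, (X i : A) ^ (Pi.single j 1 : Fin s → ℕ) i) = X j := by
  rw [Finset.prod_eq_single j (fun i _ hij => by rw [Pi.single_eq_of_ne hij, pow_zero])
    (fun h => absurd (Finset.mem_univ j) h), Pi.single_eq_same, pow_one]

lemma prod_X_pow_dphi (p : Fin s × Fin s) :
    (∏ i, (X i : A) ^ dphi s p i) = X p.1 * X p.2 := by
  unfold dphi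
  simp only [pow_add]
  rw [Finset.prod_mul_distrib, prod_X_pow_single, prod_X_pow_single]

lemma multiPD_dphi (p : Fin s × Fin s) (f : A) :
    multiPD (dphi s p) f = pderiv p.1 (pderiv p.2 f) :=
  multiPD_pair p.1 p.2 f

lemma euler_sum (β : Fin s → ℕ) :
    (∑ p : Fin s × Fin s, iotaL K A (pderiv p.1 (pderiv p.2 (∏ i, X i ^ β i)))
        * (iotaL K A (X p.2) * dA2 K A (X p.1)))
      + ∑ j, iotaL K A (pderiv j (∏ i, X i ^ β i)) * dA2 K A (X j)
    = (∑ i, β i) • ∑ j, iotaL K A (pderiv j (∏ i, X i ^ β i)) * dA2 K A (X j) := by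
  simp only [iotaL_eq]
  rw [Fintype.sum_prod_type, ← Finset.sum_add_distrib, Finset.smul_sum]
  refine Finset.sum_congr rfl fun a _ => ?_
  have h1 : ∀ b : Fin s, iotaHom K A (pderiv a (pderiv b (∏ i, X i ^ β i)))
        * (iotaHom K A (X b) * dA2 K A (X a))
      = iotaHom K A (X b * pderiv b (pderiv a (∏ i, X i ^ β i))) * dA2 K A (X a) := fun b => by
    rw [pderiv_comm a b, map_mul]
    ring
  simp only [h1]
  rw [← Finset.sum_mul, ← map_sum, ← add_mul, ← map_add, euler β a, map_nsmul, smul_mul_assoc]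

end Main

/-- For `A = K[x_1,…,x_s]` over a field `K` of characteristic zero, and every
monomial `x^β`:
`d²(x^β) = ∑_{|α|=2} (1/α!) (∂^α x^β) d²(x^α) + (2 − |β|) ∑_{|α|=1} (1/α!) (∂^α x^β) d²(x^α)`. -/
theorem dA2_monomial (K : Type*) [Field K] [CharZero K] (s : ℕ) (β : Fin s → ℕ) :
    dA2 K (MvPolynomial (Fin s) K) (∏ i, MvPolynomial.X i ^ β i) =
      (∑ α ∈ Finset.Nat.antidiagonalTuple s 2,
        iotaL K (MvPolynomial (Fin s) K)
            (((∏ i, (α i).factorial : ℕ) : K)⁻¹ • multiPD α (∏ i, MvPolynomial.X i ^ β i)) *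
          dA2 K (MvPolynomial (Fin s) K) (∏ i, MvPolynomial.X i ^ α i))
      + (2 - (∑ i, β i : ℤ)) •
        ∑ α ∈ Finset.Nat.antidiagonalTuple s 1,
          iotaL K (MvPolynomial (Fin s) K)
              (((∏ i, (α i).factorial : ℕ) : K)⁻¹ • multiPD α (∏ i, MvPolynomial.X i ^ β i)) *
            dA2 K (MvPolynomial (Fin s) K) (∏ i, MvPolynomial.X i ^ α i) := by
  have hw : ∀ α : Fin s → ℕ,
      iotaL K (MvPolynomial (Fin s) K)
          (((∏ i, (α i).factorial : ℕ) : K)⁻¹ • multiPD α (∏ i, X i ^ β i)) *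
        dA2 K (MvPolynomial (Fin s) K) (∏ i, X i ^ α i)
      = ((∏ i, (α i).factorial : ℕ) : K)⁻¹ •
          (iotaL K (MvPolynomial (Fin s) K) (multiPD α (∏ i, X i ^ β i)) *
            dA2 K (MvPolynomial (Fin s) K) (∏ i, X i ^ α i)) := fun α => by
    rw [iotaL_smul, smul_mul_assoc]
  simp only [hw]
  rw [sumW1 (K := K) (fun α => iotaL K (MvPolynomial (Fin s) K) (multiPD α (∏ i, X i ^ β i)) *
        dA2 K (MvPolynomial (Fin s) K) (∏ i, X i ^ α i)),
      sumW2 (K := K) (fun α => iotaL K (MvPolynomial (Fin s) K) (multiPD α (∏ i, X i ^ β i)) *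
        dA2 K (MvPolynomial (Fin s) K) (∏ i, X i ^ α i))]
  simp only [multiPD_single, multiPD_dphi, prod_X_pow_single, prod_X_pow_dphi]
  -- expand dA2 of a product of two variables
  have hmul : ∀ p : Fin s × Fin s,
      iotaL K (MvPolynomial (Fin s) K) (pderiv p.1 (pderiv p.2 (∏ i, X i ^ β i))) *
          dA2 K (MvPolynomial (Fin s) K) (X p.1 * X p.2)
      = iotaL K (MvPolynomial (Fin s) K) (pderiv p.1 (pderiv p.2 (∏ i, X i ^ β i))) * (iotaL K (MvPolynomial (Fin s) K) (X p.2) * dA2 K (MvPolynomial (Fin s) K) (X p.1))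
        + iotaL K (MvPolynomial (Fin s) K) (pderiv p.1 (pderiv p.2 (∏ i, X i ^ β i))) * (iotaL K (MvPolynomial (Fin s) K) (X p.1) * dA2 K (MvPolynomial (Fin s) K) (X p.2))
        + iotaL K (MvPolynomial (Fin s) K) (pderiv p.1 (pderiv p.2 (∏ i, X i ^ β i))) *
            (dA2 K (MvPolynomial (Fin s) K) (X p.1) * dA2 K (MvPolynomial (Fin s) K) (X p.2)) := fun p => by
    rw [dA2_mul]
    ring
  simp only [hmul]
  rw [Finset.sum_add_distrib, Finset.sum_add_distrib]
  -- swap lemma: the two cross sums agree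
  have hswap : ∑ p : Fin s × Fin s,
        iotaL K (MvPolynomial (Fin s) K) (pderiv p.1 (pderiv p.2 (∏ i, X i ^ β i))) *
          (iotaL K (MvPolynomial (Fin s) K) (X p.1) * dA2 K (MvPolynomial (Fin s) K) (X p.2))
      = ∑ p : Fin s × Fin s,
        iotaL K (MvPolynomial (Fin s) K) (pderiv p.1 (pderiv p.2 (∏ i, X i ^ β i))) *
          (iotaL K (MvPolynomial (Fin s) K) (X p.2) * dA2 K (MvPolynomial (Fin s) K) (X p.1)) := by
    refine Fintype.sum_equiv (Equiv.prodComm (Fin s) (Fin s)) _ _ fun p => ?_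
    simp only [Equiv.prodComm_apply, Prod.fst_swap, Prod.snd_swap]
    rw [pderiv_comm]
  rw [hswap, taylor2 (∏ i, X i ^ β i)]
  -- now pure additive bookkeeping plus the Euler identity
  have hkey := euler_sum (K := K) β
  set T : (MvPolynomial (Fin s) K ⊗[K] MvPolynomial (Fin s) K) ⧸
      (KaehlerDifferential.ideal K (MvPolynomial (Fin s) K) ^ 3) :=
    ∑ j, iotaL K (MvPolynomial (Fin s) K) (pderiv j (∏ i, X i ^ β i)) * dA2 K (MvPolynomial (Fin s) K) (X j) with hT
  set Sa : (MvPolynomial (Fin s) K ⊗[K] MvPolynomial (Fin s) K) ⧸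
      (KaehlerDifferential.ideal K (MvPolynomial (Fin s) K) ^ 3) :=
    ∑ p : Fin s × Fin s, iotaL K (MvPolynomial (Fin s) K) (pderiv p.1 (pderiv p.2 (∏ i, X i ^ β i))) *
      (iotaL K (MvPolynomial (Fin s) K) (X p.2) * dA2 K (MvPolynomial (Fin s) K) (X p.1)) with hSa
  set S2 : (MvPolynomial (Fin s) K ⊗[K] MvPolynomial (Fin s) K) ⧸
      (KaehlerDifferential.ideal K (MvPolynomial (Fin s) K) ^ 3) :=
    ∑ p : Fin s × Fin s, iotaL K (MvPolynomial (Fin s) K) (pderiv p.1 (pderiv p.2 (∏ i, X i ^ β i))) *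
      (dA2 K (MvPolynomial (Fin s) K) (X p.1) * dA2 K (MvPolynomial (Fin s) K) (X p.2)) with hS2
  -- goal : T + 2⁻¹ • S2 = 2⁻¹ • (Sa + Sa + S2) + (2 - n) • T
  have hn : (∑ i : Fin s, (β i : ℤ)) = ((∑ i, β i : ℕ) : ℤ) := by
    rw [Nat.cast_sum]
  rw [smul_add, inv_two_smul_add, hn]
  have hSaT : Sa = (∑ i, β i) • T - T := eq_sub_of_add_eq hkey
  rw [hSaT, sub_smul, natCast_zsmul]
  generalize (∑ i : Fin s, β i) • T = U
  abel
end

section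
/- Let K have characteristic zero, A = K[x_1,…,x_s], Ω^{(2)}_{A/K} = I_A/I_A^3 with canonical map d = d_A^2. If |β| = 2 (i.e. x^β is a degree-2 monomial), then the product d(x)^β := d(x_1)^{β_1}⋯d(x_s)^{β_s} in Ω^{(2)}_{A/K} (computed via the ring structure of (A⊗A)/I_A^3) equals d(x^β) − Σ_{i=1}^s (∂ x^β/∂x_i) d(x_i). -/
open TensorProduct

lemma exists_pair_aux {s : ℕ} (β : Fin s → ℕ) (hβ : ∑ i, β i = 2) :
    ∃ j k, β = Pi.single j 1 + Pi.single k 1 := by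
  have h1 : ∃ j, 1 ≤ β j := by
    by_contra h
    push_neg at h
    simp only [Nat.lt_one_iff] at h
    rw [Finset.sum_eq_zero (fun i _ => h i)] at hβ
    omega
  obtain ⟨j, hj⟩ := h1
  have hsplit : β j + ∑ i ∈ Finset.univ.erase j, β i = 2 := by
    rw [Finset.add_sum_erase _ _ (Finset.mem_univ j)]; exact hβ
  rcases Nat.lt_or_ge (β j) 2 with h2 | h2
  · have hbj : β j = 1 := by omega
    have hrest : ∑ i ∈ Finset.univ.erase j, β i = 1 := by omega
    have h3 : ∃ k ∈ Finset.univ.erase j, 1 ≤ β k := by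
      by_contra h
      push_neg at h
      simp only [Nat.lt_one_iff] at h
      rw [Finset.sum_eq_zero h] at hrest
      omega
    obtain ⟨k, hk, hk1⟩ := h3
    have hsplit2 : β k + ∑ i ∈ (Finset.univ.erase j).erase k, β i = 1 := by
      rw [Finset.add_sum_erase _ _ hk]; exact hrest
    have hbk : β k = 1 := by omega
    have hz : ∀ i ∈ (Finset.univ.erase j).erase k, β i = 0 := by
      rw [← Finset.sum_eq_zero_iff]; omega
    have hkj : k ≠ j := (Finset.mem_erase.mp hk).1
    refine ⟨j, k, funext fun i => ?_⟩
    by_cases hij : i = j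
    · subst hij; simp [Pi.single_apply, hbj, Ne.symm hkj]
    · by_cases hik : i = k
      · subst hik; simp [Pi.single_apply, hbk, hij]
      · have : β i = 0 := hz i (by simp [hij, hik])
        simp [Pi.single_apply, this, hij, hik]
  · have hbj : β j = 2 := by omega
    have hz : ∀ i ∈ Finset.univ.erase j, β i = 0 := by
      rw [← Finset.sum_eq_zero_iff]; omega
    refine ⟨j, j, funext fun i => ?_⟩
    by_cases hij : i = j
    · subst hij; simp [Pi.single_apply, hbj]
    · have : β i = 0 := hz i (by simp [hij])
      simp [Pi.single_apply, this, hij]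

lemma prod_pair_aux {M : Type*} [CommMonoid M] {s : ℕ} (f : Fin s → M) (j k : Fin s) :
    ∏ i, f i ^ (Pi.single j 1 + Pi.single k 1 : Fin s → ℕ) i = f j * f k := by
  have h : ∀ (l : Fin s), ∏ i, f i ^ (Pi.single l 1 : Fin s → ℕ) i = f l := by
    intro l
    rw [Finset.prod_eq_single l]
    · simp
    · intro i _ hi; simp [Pi.single_apply, hi]
    · simp
  simp only [Pi.add_apply, pow_add, Finset.prod_mul_distrib, h]

/-- For `A = K[x_1,…,x_s]` over a field of characteristic zero and a degree-2
monomial `x^β` (`|β| = 2`), in `(A ⊗ A)/I_A^3` one has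
`d(x)^β = d(x^β) − ∑_i (∂x^β/∂x_i) d(x_i)`. -/
theorem dX_pow_beta (K : Type*) [Field K] [CharZero K] (s : ℕ) (β : Fin s → ℕ)
    (hβ : ∑ i, β i = 2) :
    (∏ i, dA2 K (MvPolynomial (Fin s) K) (MvPolynomial.X i) ^ β i) =
      dA2 K (MvPolynomial (Fin s) K) (∏ i, MvPolynomial.X i ^ β i)
        - ∑ i, iotaL K (MvPolynomial (Fin s) K)
            (MvPolynomial.pderiv i (∏ i', MvPolynomial.X i' ^ β i')) *
          dA2 K (MvPolynomial (Fin s) K) (MvPolynomial.X i) := by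
  obtain ⟨j, k, rfl⟩ := exists_pair_aux β hβ
  rw [prod_pair_aux, prod_pair_aux]
  set A := MvPolynomial (Fin s) K
  -- sum of derivatives, at the tensor level
  have hsum : ∑ i, (MvPolynomial.pderiv i (MvPolynomial.X j * MvPolynomial.X k) : A) ⊗ₜ[K] (1:A) *
        ((1:A) ⊗ₜ[K] (MvPolynomial.X i) - (MvPolynomial.X i) ⊗ₜ[K] (1:A))
      = (MvPolynomial.X k : A) ⊗ₜ[K] (1:A) *
          ((1:A) ⊗ₜ[K] (MvPolynomial.X j) - (MvPolynomial.X j) ⊗ₜ[K] (1:A))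
      + (MvPolynomial.X j : A) ⊗ₜ[K] (1:A) *
          ((1:A) ⊗ₜ[K] (MvPolynomial.X k) - (MvPolynomial.X k) ⊗ₜ[K] (1:A)) := by
    have hp : ∀ i : Fin s, (MvPolynomial.pderiv i (MvPolynomial.X j * MvPolynomial.X k) : A)
        = (if j = i then MvPolynomial.X k else 0) + (if k = i then MvPolynomial.X j else 0) := by
      intro i
      rw [MvPolynomial.pderiv_mul]
      simp only [MvPolynomial.pderiv_X, Pi.single_apply]
      split <;> split <;> simp [mul_comm]
    simp only [hp, add_tmul, ite_tmul, add_mul, Finset.sum_add_distrib, ite_mul, zero_mul,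
      Finset.sum_ite_eq, Finset.mem_univ, if_true]
  simp only [dA2, iotaL, ← map_mul, ← map_sum, ← map_sub]
  congr 1
  rw [hsum]
  have e1 : (1:A) ⊗ₜ[K] (MvPolynomial.X j * MvPolynomial.X k)
      = ((1:A) ⊗ₜ[K] (MvPolynomial.X j : A)) * ((1:A) ⊗ₜ[K] (MvPolynomial.X k : A)) := by
    rw [Algebra.TensorProduct.tmul_mul_tmul, one_mul]
  have e2 : (MvPolynomial.X j * MvPolynomial.X k : A) ⊗ₜ[K] (1:A)
      = ((MvPolynomial.X j : A) ⊗ₜ[K] (1:A)) * ((MvPolynomial.X k : A) ⊗ₜ[K] (1:A)) := by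
    rw [Algebra.TensorProduct.tmul_mul_tmul, one_mul]
  rw [e1, e2]
  ring
end

section
/- Let K be a field of characteristic zero, A = K[x] and A_n = K[x_0,…,x_n]. Let d_0,…,d_n be the universal Hasse-Schmidt derivations (d_j(x) = x_j). For a second-order K-derivation D : A_n → A_n written as D = Σ_{|α|=2} F_α (1/α!) ∂^α/∂x^α + Σ_{|α|=1} F_α ∂^α/∂x^α with F_α = D(x^α) ∈ A_n (in the sense of Remark on order-2 derivations of polynomial rings), the induced map D̄ : A → A_n ⊗ B_n vanishes if and only if F_{e_j} = 0 for all j ∈ {0,…,n} and Σ_{i=0}^j F_{e_i + e_{j−i}} = 0 for all j ∈ {0,…,n}, where e_0,…,e_n is the standard basis of ℕ^{n+1}. -/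
open TensorProduct

set_option synthInstance.maxHeartbeats 1000000
set_option maxHeartbeats 1000000

set_option linter.unusedSectionVars false

namespace HSbar

open Finset

variable {σ : Type*} [Fintype σ] [DecidableEq σ] {K : Type*} [CommSemiring K]

open MvPolynomial

lemma pderiv_comm (a b : σ) (f : MvPolynomial σ K) :
    pderiv a (pderiv b f) = pderiv b (pderiv a f) := by
  induction f using MvPolynomial.induction_on' with
  | monomial s c =>
    rcases eq_or_ne a b with rfl | hab
    · rfl
    · simp only [pderiv_monomial]
      rw [tsub_right_comm]
      congr 1
      · rw [Finsupp.tsub_apply, Finsupp.tsub_apply, Finsupp.single_eq_of_ne' hab,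
          Finsupp.single_eq_of_ne' hab.symm, Nat.sub_zero, Nat.sub_zero, mul_right_comm]
  | add p q hp hq => simp [hp, hq]

/-- coefficientwise partial derivative on `(MvPolynomial σ K)[t]` -/
noncomputable def cwD (a : σ) (p : Polynomial (MvPolynomial σ K)) :
    Polynomial (MvPolynomial σ K) :=
  ⟨.ofCoeff (p.toFinsupp.coeff.mapRange (⇑(pderiv a)) (map_zero _))⟩

@[simp] lemma coeff_cwD (a : σ) (p : Polynomial (MvPolynomial σ K)) (j : ℕ) :
    (cwD a p).coeff j = pderiv a (p.coeff j) := by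
  rcases p with ⟨p⟩
  simp [cwD, Polynomial.coeff]

lemma cwD_add (a : σ) (p q : Polynomial (MvPolynomial σ K)) :
    cwD a (p + q) = cwD a p + cwD a q := by
  ext j; simp

lemma cwD_mul (a : σ) (p q : Polynomial (MvPolynomial σ K)) :
    cwD a (p * q) = cwD a p * q + p * cwD a q := by
  ext j
  simp only [coeff_cwD, Polynomial.coeff_add, Polynomial.coeff_mul, map_sum, pderiv_mul]
  rw [← Finset.sum_add_distrib]

lemma cwD_pow (a : σ) (p : Polynomial (MvPolynomial σ K)) (m : ℕ) :
    cwD a (p ^ (m + 1)) = (m + 1) • (p ^ m * cwD a p) := by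
  induction m with
  | zero => simp [cwD]
  | succ m ih =>
    rw [pow_succ, cwD_mul, ih, succ_nsmul, add_mul, smul_mul_assoc,
      mul_right_comm (p ^ m) (cwD a p) p, ← pow_succ, succ_nsmul (p ^ (m+1) * cwD a p) (m+1),
      succ_nsmul (p ^ (m+1) * cwD a p) m]

variable {K : Type*} [CommRing K] {n : ℕ}

noncomputable def u (K : Type*) [CommRing K] (n : ℕ) :
    Polynomial (MvPolynomial (Fin (n + 1)) K) :=
  ∑ j : Fin (n + 1),
    Polynomial.C (MvPolynomial.X j : MvPolynomial (Fin (n + 1)) K) * Polynomial.X ^ (j : ℕ)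

lemma hsD_eq (i : ℕ) (f : Polynomial K) :
    hsD K n i f = (Polynomial.aeval (u K n) f).coeff i := rfl

lemma cwD_sum {σ : Type*} [Fintype σ] [DecidableEq σ] {K : Type*} [CommSemiring K]
    (a : σ) {ι : Type*} (s : Finset ι) (p : ι → Polynomial (MvPolynomial σ K)) :
    cwD a (∑ i ∈ s, p i) = ∑ i ∈ s, cwD a (p i) := by
  ext j
  simp [Polynomial.finset_sum_coeff, map_sum]

lemma cwD_C_mul {σ : Type*} [Fintype σ] [DecidableEq σ] {K : Type*} [CommSemiring K]
    (a : σ) (c : MvPolynomial σ K) (p : Polynomial (MvPolynomial σ K)) :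
    cwD a (Polynomial.C c * p) =
      Polynomial.C (MvPolynomial.pderiv a c) * p + Polynomial.C c * cwD a p := by
  have hC : cwD a (Polynomial.C c) = Polynomial.C (MvPolynomial.pderiv a c) := by
    ext j
    simp [Polynomial.coeff_C, apply_ite (⇑(MvPolynomial.pderiv a))]
  rw [cwD_mul, hC]

lemma cwD_u (a : Fin (n + 1)) : cwD a (u K n) = Polynomial.X ^ (a : ℕ) := by
  rw [u, cwD_sum]
  ext j
  simp only [Polynomial.finset_sum_coeff, coeff_cwD, Polynomial.coeff_C_mul,
    Polynomial.coeff_X_pow, mul_ite, mul_one, mul_zero, apply_ite (⇑(MvPolynomial.pderiv a)), map_zero,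
    MvPolynomial.pderiv_X]
  rw [Finset.sum_eq_single a]
  · simp [Pi.single_eq_same]
  · intro b _ hb
    simp [Pi.single_eq_of_ne hb]
  · simp

lemma cwD_aeval (a : Fin (n + 1)) (f : Polynomial K) :
    cwD a (Polynomial.aeval (u K n) f) =
      Polynomial.aeval (u K n) (Polynomial.derivative f) * Polynomial.X ^ (a : ℕ) := by
  induction f using Polynomial.induction_on' with
  | add p q hp hq => simp [cwD_add, hp, hq, add_mul]
  | monomial m c =>
    rw [Polynomial.aeval_monomial]
    have halg : (algebraMap K (Polynomial (MvPolynomial (Fin (n+1)) K))) c =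
        Polynomial.C (MvPolynomial.C c) := rfl
    rw [halg]
    cases m with
    | zero =>
      simp [cwD_C_mul, cwD]
    | succ m =>
      rw [cwD_C_mul, MvPolynomial.pderiv_C, cwD_pow, cwD_u, Polynomial.derivative_monomial]
      rw [Polynomial.aeval_monomial, Nat.add_sub_cancel, map_mul, halg, map_natCast]
      simp only [map_zero, Polynomial.C_0, zero_mul, zero_add]
      rw [nsmul_eq_mul]
      push_cast
      ring

lemma pderiv_hsD (a : Fin (n + 1)) (j : ℕ) (f : Polynomial K) :
    MvPolynomial.pderiv a (hsD K n j f) =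
      if (a : ℕ) ≤ j then hsD K n (j - (a : ℕ)) (Polynomial.derivative f) else 0 := by
  rw [hsD_eq, ← coeff_cwD, cwD_aeval, Polynomial.coeff_mul_X_pow']
  split <;> simp [hsD_eq]

lemma pd2_hsD (a b : Fin (n + 1)) (j : ℕ) (f : Polynomial K) :
    MvPolynomial.pderiv a (MvPolynomial.pderiv b (hsD K n j f)) =
      if (a : ℕ) + (b : ℕ) ≤ j then
        hsD K n (j - ((a : ℕ) + (b : ℕ)))
          (Polynomial.derivative (Polynomial.derivative f)) else 0 := by
  rw [pderiv_hsD]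
  split
  · rw [pderiv_hsD]
    rename_i hb
    by_cases ha : (a : ℕ) ≤ j - (b : ℕ)
    · rw [if_pos ha, if_pos (by omega)]
      congr 1
      omega
    · rw [if_neg ha, if_neg (by omega)]
  · rw [map_zero, if_neg (by omega)]

lemma hsD_zero (j : ℕ) : hsD K n j (0 : Polynomial K) = 0 := by
  simp [hsD_eq]

lemma hsD_C (j : ℕ) (c : K) :
    hsD K n j (Polynomial.C c) = if j = 0 then MvPolynomial.C c else 0 := by
  rw [hsD_eq]
  have : Polynomial.aeval (u K n) (Polynomial.C c) = Polynomial.C (MvPolynomial.C c) := by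
    simp [Polynomial.aeval_C]
  rw [this, Polynomial.coeff_C]

lemma hsD_one (j : ℕ) : hsD K n j (1 : Polynomial K) = if j = 0 then 1 else 0 := by
  have := hsD_C (K := K) (n := n) j 1
  simpa using this

section foldr

open MvPolynomial

variable {σ : Type*} [Fintype σ] [DecidableEq σ] {K' : Type*} [CommSemiring K']

lemma foldr_zero (l : List σ) (α : σ → ℕ) (hα : ∀ i ∈ l, α i = 0) (f : MvPolynomial σ K') :
    l.foldr (fun i g => (⇑(pderiv (R := K') i))^[α i] g) f = f := by
  induction l with
  | nil => rfl
  | cons i t ih =>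
    simp only [List.foldr_cons]
    rw [hα i (by simp), ih fun x hx => hα x (by simp [hx])]
    rfl

lemma foldr_one (l : List σ) (hl : l.Nodup) (a : σ) (ha : a ∈ l) (α : σ → ℕ)
    (h1 : α a = 1) (h0 : ∀ i ∈ l, i ≠ a → α i = 0) (f : MvPolynomial σ K') :
    l.foldr (fun i g => (⇑(pderiv (R := K') i))^[α i] g) f = pderiv a f := by
  induction l with
  | nil => simp at ha
  | cons i t ih =>
    rcases List.nodup_cons.mp hl with ⟨hit, htnd⟩
    simp only [List.foldr_cons]
    rcases eq_or_ne i a with rfl | hia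
    · rw [h1, foldr_zero t α fun x hx => h0 x (by simp [hx]) (by rintro rfl; exact hit hx)]
      rfl
    · rw [h0 i (by simp) hia]
      refine ih htnd ?_ fun x hx => h0 x (by simp [hx])
      rcases List.mem_cons.mp ha with h | h
      · exact absurd h.symm hia
      · exact h

lemma foldr_two_ne (l : List σ) (hl : l.Nodup) (a b : σ) (hab : a ≠ b)
    (ha : a ∈ l) (hb : b ∈ l) (α : σ → ℕ)
    (h1 : α a = 1) (h2 : α b = 1) (h0 : ∀ i ∈ l, i ≠ a → i ≠ b → α i = 0)
    (f : MvPolynomial σ K') :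
    l.foldr (fun i g => (⇑(pderiv (R := K') i))^[α i] g) f = pderiv a (pderiv b f) := by
  induction l with
  | nil => simp at ha
  | cons i t ih =>
    rcases List.nodup_cons.mp hl with ⟨hit, htnd⟩
    simp only [List.foldr_cons]
    rcases eq_or_ne i a with rfl | hia
    · have hbt : b ∈ t := by
        rcases List.mem_cons.mp hb with h | h
        · exact absurd h.symm hab
        · exact h
      rw [h1, foldr_one t htnd b hbt α h2
        (fun x hx hxb => h0 x (by simp [hx]) (by rintro rfl; exact hit hx) hxb)]
      rfl
    · rcases eq_or_ne i b with rfl | hib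
      · have hat : a ∈ t := by
          rcases List.mem_cons.mp ha with h | h
          · exact absurd h hia.symm
          · exact h
        rw [h2, foldr_one t htnd a hat α h1
          (fun x hx hxa => h0 x (by simp [hx]) hxa (by rintro rfl; exact hit hx))]
        simp only [Function.iterate_one]
        exact pderiv_comm i a f
      · have hat : a ∈ t := by
          rcases List.mem_cons.mp ha with h | h
          · exact absurd h hia.symm
          · exact h
        have hbt : b ∈ t := by
          rcases List.mem_cons.mp hb with h | h
          · exact absurd h hib.symm
          · exact h
        rw [h0 i (by simp) hia hib]
        exact ih htnd hat hbt fun x hx => h0 x (by simp [hx])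

lemma foldr_two_eq (l : List σ) (hl : l.Nodup) (a : σ) (ha : a ∈ l) (α : σ → ℕ)
    (h2 : α a = 2) (h0 : ∀ i ∈ l, i ≠ a → α i = 0) (f : MvPolynomial σ K') :
    l.foldr (fun i g => (⇑(pderiv (R := K') i))^[α i] g) f = pderiv a (pderiv a f) := by
  induction l with
  | nil => simp at ha
  | cons i t ih =>
    rcases List.nodup_cons.mp hl with ⟨hit, htnd⟩
    simp only [List.foldr_cons]
    rcases eq_or_ne i a with rfl | hia
    · rw [h2, foldr_zero t α fun x hx => h0 x (by simp [hx]) (by rintro rfl; exact hit hx)]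
      rfl
    · rw [h0 i (by simp) hia]
      refine ih htnd ?_ fun x hx => h0 x (by simp [hx])
      rcases List.mem_cons.mp ha with h | h
      · exact absurd h.symm hia
      · exact h

end foldr

section multiPDlemmas

open MvPolynomial

variable {σ : Type*} [Fintype σ] [DecidableEq σ] {K' : Type*} [CommSemiring K']

lemma multiPD_single (a : σ) (f : MvPolynomial σ K') :
    multiPD (Pi.single a 1) f = pderiv a f :=
  foldr_one _ Finset.univ.nodup_toList a (by simp) _ (Pi.single_eq_same a 1)
    (fun i _ hia => Pi.single_eq_of_ne hia 1) f

lemma multiPD_pair {a b : σ} (hab : a ≠ b) (f : MvPolynomial σ K') :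
    multiPD (Pi.single a 1 + Pi.single b 1) f = pderiv a (pderiv b f) := by
  refine foldr_two_ne _ Finset.univ.nodup_toList a b hab (by simp) (by simp) _ ?_ ?_ ?_ f
  · simp [Pi.single_eq_same, Pi.single_eq_of_ne hab]
  · simp [Pi.single_eq_same, Pi.single_eq_of_ne hab.symm]
  · intro i _ hia hib
    simp [Pi.single_eq_of_ne hia, Pi.single_eq_of_ne hib]

lemma multiPD_double (a : σ) (f : MvPolynomial σ K') :
    multiPD (Pi.single a 2) f = pderiv a (pderiv a f) :=
  foldr_two_eq _ Finset.univ.nodup_toList a (by simp) _ (Pi.single_eq_same a 2)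
    (fun i _ hia => Pi.single_eq_of_ne hia 2) f

end multiPDlemmas

section comb

variable {m : ℕ}

lemma sum_one {α : Fin m → ℕ} (h : ∑ i, α i = 1) : ∃ a, α = Pi.single a 1 := by
  have hex : ∃ a, α a ≠ 0 := by
    by_contra hc
    push_neg at hc
    simp [hc] at h
  obtain ⟨a, ha⟩ := hex
  have hsplit : α a + ∑ i ∈ Finset.univ.erase a, α i = 1 := by
    rw [Finset.add_sum_erase _ _ (Finset.mem_univ a), h]
  have ha1 : α a = 1 := by omega
  have hz : ∑ i ∈ Finset.univ.erase a, α i = 0 := by omega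
  refine ⟨a, funext fun i => ?_⟩
  rcases eq_or_ne i a with rfl | hia
  · simp [ha1, Pi.single_eq_same]
  · rw [Pi.single_eq_of_ne hia]
    exact (Finset.sum_eq_zero_iff.mp hz) i (Finset.mem_erase.mpr ⟨hia, Finset.mem_univ i⟩)

lemma sum_two {α : Fin m → ℕ} (h : ∑ i, α i = 2) :
    ∃ a b, α = Pi.single a 1 + Pi.single b 1 := by
  have hex : ∃ a, α a ≠ 0 := by
    by_contra hc
    push_neg at hc
    simp [hc] at h
  obtain ⟨a, ha⟩ := hex
  have hsplit : α a + ∑ i ∈ Finset.univ.erase a, α i = 2 := by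
    rw [Finset.add_sum_erase _ _ (Finset.mem_univ a), h]
  set β : Fin m → ℕ := Function.update α a (α a - 1) with hβ
  have hβsum : ∑ i, β i = 1 := by
    have h1 : β a + ∑ i ∈ Finset.univ.erase a, β i = ∑ i, β i := by
      rw [Finset.add_sum_erase _ _ (Finset.mem_univ a)]
    have h2 : ∑ i ∈ Finset.univ.erase a, β i = ∑ i ∈ Finset.univ.erase a, α i := by
      refine Finset.sum_congr rfl fun i hi => ?_
      rw [hβ, Function.update_of_ne (Finset.mem_erase.mp hi).1]
    have h3 : β a = α a - 1 := by rw [hβ, Function.update_self]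
    omega
  obtain ⟨b, hb⟩ := sum_one hβsum
  refine ⟨a, b, funext fun i => ?_⟩
  rcases eq_or_ne i a with hrf | hia
  · subst hrf
    have h4 : β i = α i - 1 := by rw [hβ, Function.update_self]
    have hba : (Pi.single b 1 : Fin m → ℕ) i = β i := by rw [← hb]
    simp only [Pi.add_apply, Pi.single_eq_same]
    omega
  · have hβi : β i = α i := by rw [hβ, Function.update_of_ne hia]
    have hbi : (Pi.single b 1 : Fin m → ℕ) i = α i := by rw [← hb, hβi]
    simp only [Pi.add_apply, Pi.single_eq_of_ne hia, zero_add]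
    omega

lemma single_pair_eq {a b c d : Fin m}
    (h : (Pi.single a 1 + Pi.single b 1 : Fin m → ℕ) = Pi.single c 1 + Pi.single d 1) :
    (a = c ∧ b = d) ∨ (a = d ∧ b = c) := by
  by_cases hac : a = c
  · subst hac
    have hbd : (Pi.single b 1 : Fin m → ℕ) = Pi.single d 1 := by
      exact add_left_cancel h
    left
    refine ⟨rfl, ?_⟩
    have hc := congrFun hbd b
    rw [Pi.single_eq_same] at hc
    by_contra hne
    rw [Pi.single_eq_of_ne hne] at hc
    exact one_ne_zero hc
  · have had : a = d := by
      have hc := congrFun h a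
      by_contra hnd
      rw [Pi.add_apply, Pi.add_apply, Pi.single_eq_same, Pi.single_eq_of_ne hac,
        Pi.single_eq_of_ne hnd] at hc
      omega
    subst had
    right
    refine ⟨rfl, ?_⟩
    rw [add_comm (Pi.single c 1)] at h
    have hbc : (Pi.single b 1 : Fin m → ℕ) = Pi.single c 1 := add_left_cancel h
    have hc := congrFun hbc b
    rw [Pi.single_eq_same] at hc
    by_contra hne
    rw [Pi.single_eq_of_ne hne] at hc
    exact one_ne_zero hc

lemma AT1_eq (m : ℕ) : Finset.Nat.antidiagonalTuple m 1 =
    Finset.univ.image (fun i : Fin m => (Pi.single i 1 : Fin m → ℕ)) := by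
  ext α
  rw [Finset.Nat.mem_antidiagonalTuple, Finset.mem_image]
  constructor
  · intro h
    obtain ⟨a, rfl⟩ := sum_one h
    exact ⟨a, Finset.mem_univ a, rfl⟩
  · rintro ⟨a, -, rfl⟩
    simp [Pi.single_apply]

lemma prod_fact_double (a : Fin m) :
    (∏ i, (((Pi.single a 2 : Fin m → ℕ)) i).factorial) = 2 := by
  rw [Finset.prod_eq_single a]
  · rw [Pi.single_eq_same]; rfl
  · intro i _ hia
    rw [Pi.single_eq_of_ne hia]; rfl
  · intro h; exact absurd (Finset.mem_univ a) h

lemma prod_fact_pair {a b : Fin m} (hab : a ≠ b) :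
    (∏ i, (((Pi.single a 1 + Pi.single b 1 : Fin m → ℕ)) i).factorial) = 1 := by
  refine Finset.prod_eq_one fun i _ => ?_
  rcases eq_or_ne i a with rfl | hia
  · simp [Pi.single_eq_same, Pi.single_eq_of_ne hab]
  · rcases eq_or_ne i b with rfl | hib
    · simp [Pi.single_eq_same, Pi.single_eq_of_ne hab.symm]
    · simp [Pi.single_eq_of_ne hia, Pi.single_eq_of_ne hib]

end comb

section AT2

open MvPolynomial Finset

variable {K : Type*} [Field K] [CharZero K] {n : ℕ}

lemma AT2_sum (G : (Fin (n + 1) → ℕ) → MvPolynomial (Fin (n + 1)) K)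
    (g : MvPolynomial (Fin (n + 1)) K) :
    (∑ α ∈ Finset.Nat.antidiagonalTuple (n + 1) 2,
      G α * (((∏ i, (α i).factorial : ℕ) : K)⁻¹ • multiPD α g))
    = (2 : K)⁻¹ • ∑ p ∈ Finset.univ ×ˢ Finset.univ,
        G (Pi.single p.1 1 + Pi.single p.2 1) *
          pderiv p.1 (pderiv p.2 g) := by
  have hmaps : ∀ p ∈ (Finset.univ ×ˢ Finset.univ : Finset (Fin (n+1) × Fin (n+1))),
      (Pi.single p.1 1 + Pi.single p.2 1 : Fin (n+1) → ℕ)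
        ∈ Finset.Nat.antidiagonalTuple (n + 1) 2 := by
    intro p _
    rw [Finset.Nat.mem_antidiagonalTuple]
    simp [Pi.single_apply, Finset.sum_add_distrib]
  rw [← Finset.sum_fiberwise_of_maps_to hmaps, Finset.smul_sum]
  refine Finset.sum_congr rfl fun α hα => ?_
  obtain ⟨a, b, rfl⟩ := sum_two (Finset.Nat.mem_antidiagonalTuple.mp hα)
  rcases eq_or_ne a b with rfl | hab
  · have hfib : ((Finset.univ ×ˢ Finset.univ : Finset (Fin (n+1) × Fin (n+1))).filter
        (fun p => (Pi.single p.1 1 + Pi.single p.2 1 : Fin (n+1) → ℕ)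
          = Pi.single a 1 + Pi.single a 1)) = {(a, a)} := by
      ext p
      simp only [Finset.mem_filter, Finset.mem_product, Finset.mem_univ, true_and,
        Finset.mem_singleton]
      constructor
      · intro h
        rcases single_pair_eq h with ⟨h1, h2⟩ | ⟨h1, h2⟩ <;>
          exact Prod.ext h1 h2
      · rintro rfl; rfl
    rw [hfib, Finset.sum_singleton]
    have h2a : (Pi.single a 1 + Pi.single a 1 : Fin (n+1) → ℕ) = Pi.single a 2 := by
      rw [← Pi.single_add]
    rw [h2a, prod_fact_double, multiPD_double]
    show G (Pi.single a 2) * ((2:ℕ):K)⁻¹ • (pderiv a) ((pderiv a) g)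
      = (2:K)⁻¹ • (G (Pi.single a 2) * (pderiv a) ((pderiv a) g))
    rw [Nat.cast_ofNat, mul_smul_comm]
  · have hfib : ((Finset.univ ×ˢ Finset.univ : Finset (Fin (n+1) × Fin (n+1))).filter
        (fun p => (Pi.single p.1 1 + Pi.single p.2 1 : Fin (n+1) → ℕ)
          = Pi.single a 1 + Pi.single b 1)) = {(a, b), (b, a)} := by
      ext p
      simp only [Finset.mem_filter, Finset.mem_product, Finset.mem_univ, true_and,
        Finset.mem_insert, Finset.mem_singleton]
      constructor
      · intro h
        rcases single_pair_eq h with ⟨h1, h2⟩ | ⟨h1, h2⟩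
        · exact Or.inl (Prod.ext h1 h2)
        · exact Or.inr (Prod.ext h1 h2)
      · rintro (rfl | rfl)
        · rfl
        · exact add_comm _ _
    rw [hfib, prod_fact_pair hab, multiPD_pair hab]
    rw [Finset.sum_pair (by simp [Prod.ext_iff, hab])]
    simp only [Nat.cast_one, inv_one, one_smul]
    have hcomm : pderiv b (pderiv a g) = pderiv a (pderiv b g) := pderiv_comm b a g
    rw [hcomm, add_comm (Pi.single b 1) (Pi.single a 1)]
    rw [← two_smul K (G (Pi.single a 1 + Pi.single b 1) * pderiv a (pderiv b g)),
      smul_smul, inv_mul_cancel₀ (two_ne_zero), one_smul]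

end AT2

section Dform

open MvPolynomial Finset Polynomial

variable {K : Type*} [Field K] [CharZero K] {n : ℕ}

lemma Dform (F : (Fin (n + 1) → ℕ) → MvPolynomial (Fin (n + 1)) K)
    (D : MvPolynomial (Fin (n + 1)) K → MvPolynomial (Fin (n + 1)) K)
    (hDdef : ∀ f, D f =
      (∑ α ∈ Finset.Nat.antidiagonalTuple (n + 1) 2,
        F α * (((∏ i, (α i).factorial : ℕ) : K)⁻¹ • multiPD α f))
      + ∑ α ∈ Finset.Nat.antidiagonalTuple (n + 1) 1, F α * multiPD α f)
    (f : Polynomial K) (j : ℕ) :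
    D (hsD K n j f) =
      (2 : K)⁻¹ • (∑ p ∈ (Finset.univ ×ˢ Finset.univ : Finset (Fin (n+1) × Fin (n+1))),
        if (p.1 : ℕ) + (p.2 : ℕ) ≤ j then
          F (Pi.single p.1 1 + Pi.single p.2 1) *
            hsD K n (j - ((p.1 : ℕ) + (p.2 : ℕ)))
              (Polynomial.derivative (Polynomial.derivative f))
        else 0)
      + ∑ k : Fin (n + 1),
          if (k : ℕ) ≤ j then
            F (Pi.single k 1) * hsD K n (j - (k : ℕ)) (Polynomial.derivative f)
          else 0 := by
  rw [hDdef]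
  congr 1
  · rw [AT2_sum]
    congr 1
    refine Finset.sum_congr rfl fun p _ => ?_
    rw [pd2_hsD, mul_ite, mul_zero]
  · rw [AT1_eq, Finset.sum_image (fun i _ i' _ hii' => by
      by_contra hne
      have := congrFun hii' i
      rw [Pi.single_eq_same, Pi.single_eq_of_ne hne] at this
      exact one_ne_zero this)]
    refine Finset.sum_congr rfl fun k _ => ?_
    rw [multiPD_single, pderiv_hsD, mul_ite, mul_zero]

end Dform

section tensor

open TensorProduct Polynomial

variable {K : Type*} [Field K] [CharZero K] {n : ℕ}

lemma tensor_zero_iff (g : ℕ → MvPolynomial (Fin (n + 1)) K) :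
    (∑ j ∈ Finset.range (n + 1),
        g j ⊗ₜ[MvPolynomial (Fin (n + 1)) K]
          Ideal.Quotient.mk
            (Ideal.span
              {(Polynomial.X : Polynomial (MvPolynomial (Fin (n + 1)) K)) ^ (n + 1)})
            (Polynomial.X ^ j)) = 0
      ↔ ∀ j ∈ Finset.range (n + 1), g j = 0 := by
  letI R := MvPolynomial (Fin (n + 1)) K
  set I : Ideal (Polynomial (MvPolynomial (Fin (n + 1)) K)) :=
    Ideal.span {(Polynomial.X : Polynomial (MvPolynomial (Fin (n + 1)) K)) ^ (n + 1)} with hI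
  have hsum : (∑ j ∈ Finset.range (n + 1),
      g j ⊗ₜ[MvPolynomial (Fin (n + 1)) K] Ideal.Quotient.mk I (Polynomial.X ^ j))
      = (1 : MvPolynomial (Fin (n + 1)) K) ⊗ₜ[MvPolynomial (Fin (n + 1)) K] (Ideal.Quotient.mk I (∑ j ∈ Finset.range (n + 1),
          Polynomial.C (g j) * Polynomial.X ^ j)) := by
    rw [map_sum, TensorProduct.tmul_sum]
    refine Finset.sum_congr rfl fun j _ => ?_
    rw [show g j ⊗ₜ[MvPolynomial (Fin (n + 1)) K] Ideal.Quotient.mk I (Polynomial.X ^ j)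
        = (1 : MvPolynomial (Fin (n + 1)) K) ⊗ₜ[MvPolynomial (Fin (n + 1)) K]
            (g j • Ideal.Quotient.mk I (Polynomial.X ^ j)) by
      rw [← TensorProduct.smul_tmul, smul_eq_mul, mul_one]]
    rw [show g j • (Ideal.Quotient.mk I (Polynomial.X ^ j))
        = Ideal.Quotient.mk I (g j • Polynomial.X ^ j) from rfl, Polynomial.smul_eq_C_mul]
  rw [hsum]
  have hone : ∀ z : Polynomial (MvPolynomial (Fin (n + 1)) K) ⧸ I,
      (1 : MvPolynomial (Fin (n + 1)) K) ⊗ₜ[MvPolynomial (Fin (n + 1)) K] z = 0 ↔ z = 0 := by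
    intro z
    constructor
    · intro h
      have h1 := congrArg (TensorProduct.lid (MvPolynomial (Fin (n + 1)) K) (Polynomial (MvPolynomial (Fin (n + 1)) K) ⧸ I)) h
      rwa [LinearEquiv.map_zero, TensorProduct.lid_tmul, one_smul] at h1
    · rintro rfl; exact TensorProduct.tmul_zero _ _
  rw [hone, Ideal.Quotient.eq_zero_iff_mem, hI, Ideal.mem_span_singleton]
  constructor
  · intro ⟨q, hq⟩ j hj
    rw [Finset.mem_range] at hj
    have hc := congrArg (fun p => Polynomial.coeff p j) hq
    rw [mul_comm, Polynomial.coeff_mul_X_pow', if_neg (by omega)] at hc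
    rw [Polynomial.finset_sum_coeff] at hc
    simp only [Polynomial.coeff_C_mul, Polynomial.coeff_X_pow, mul_ite, mul_one, mul_zero] at hc
    rwa [Finset.sum_ite_eq (Finset.range (n + 1)) j g, if_pos (Finset.mem_range.mpr hj)] at hc
  · intro h
    have : (∑ j ∈ Finset.range (n + 1), Polynomial.C (g j) * Polynomial.X ^ j)
        = 0 := by
      refine Finset.sum_eq_zero fun j hj => ?_
      rw [h j hj, Polynomial.C_0, zero_mul]
    rw [this]
    exact dvd_zero _

end tensor

section regroup

open Finset

variable {K : Type*} [Field K] [CharZero K] {n : ℕ}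

def Finc (n s : ℕ) : Fin (n + 1) := ⟨min s n, by omega⟩

lemma Finc_val {s : ℕ} (hs : s ≤ n) : ((Finc n s : Fin (n + 1)) : ℕ) = s := by
  simp [Finc, hs]

lemma pair_regroup (j : ℕ) (hj : j ≤ n)
    (F : (Fin (n + 1) → ℕ) → MvPolynomial (Fin (n + 1)) K)
    (w : ℕ → MvPolynomial (Fin (n + 1)) K) :
    (∑ p ∈ (Finset.univ ×ˢ Finset.univ : Finset (Fin (n+1) × Fin (n+1))),
      if (p.1 : ℕ) + (p.2 : ℕ) ≤ j then
        F (Pi.single p.1 1 + Pi.single p.2 1) * w ((p.1 : ℕ) + (p.2 : ℕ))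
      else 0)
    = ∑ s ∈ Finset.range (j + 1),
        (∑ i ∈ Finset.univ.filter (fun i : Fin (n + 1) => i ≤ Finc n s),
          F (Pi.single i 1 + Pi.single (Finc n s - i) 1)) * w s := by
  rw [← Finset.sum_filter]
  have hmaps : ∀ p ∈ (Finset.univ ×ˢ Finset.univ :
      Finset (Fin (n+1) × Fin (n+1))).filter (fun p => (p.1 : ℕ) + (p.2 : ℕ) ≤ j),
      (p.1 : ℕ) + (p.2 : ℕ) ∈ Finset.range (j + 1) := by
    intro p hp
    rw [Finset.mem_filter] at hp
    rw [Finset.mem_range]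
    omega
  rw [← Finset.sum_fiberwise_of_maps_to hmaps]
  refine Finset.sum_congr rfl fun s hs => ?_
  rw [Finset.mem_range] at hs
  have hsj : s ≤ j := by omega
  have hsn : s ≤ n := by omega
  have hvs : ((Finc n s : Fin (n + 1)) : ℕ) = s := Finc_val hsn
  have hfe : ((Finset.univ ×ˢ Finset.univ :
      Finset (Fin (n+1) × Fin (n+1))).filter
        (fun p => (p.1 : ℕ) + (p.2 : ℕ) ≤ j)).filter
        (fun p => (p.1 : ℕ) + (p.2 : ℕ) = s)
      = (Finset.univ ×ˢ Finset.univ :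
        Finset (Fin (n+1) × Fin (n+1))).filter
        (fun p => (p.1 : ℕ) + (p.2 : ℕ) = s) := by
    rw [Finset.filter_filter]
    refine Finset.filter_congr fun p _ => ?_
    constructor
    · rintro ⟨-, h⟩; exact h
    · intro h; exact ⟨by omega, h⟩
  rw [hfe, Finset.sum_mul]
  refine Finset.sum_nbij' (fun p => p.1) (fun i => (i, Finc n s - i)) ?_ ?_ ?_ ?_ ?_
  · intro p hp
    rw [Finset.mem_filter] at hp
    rw [Finset.mem_filter]
    refine ⟨Finset.mem_univ _, ?_⟩
    rw [Fin.le_def, hvs]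
    have := hp.2
    omega
  · intro i hi
    rw [Finset.mem_filter] at hi
    have hile : (i : ℕ) ≤ s := by
      have := hi.2
      rw [Fin.le_def, hvs] at this
      exact this
    rw [Finset.mem_filter]
    refine ⟨Finset.mem_product.mpr ⟨Finset.mem_univ _, Finset.mem_univ _⟩, ?_⟩
    have hsub : ((Finc n s - i : Fin (n + 1)) : ℕ) = s - (i : ℕ) := by
      rw [Fin.coe_sub_iff_le.mpr (by rw [Fin.le_def, hvs]; omega), hvs]
    simp only [hsub]
    omega
  · intro p hp
    rw [Finset.mem_filter] at hp
    have hps : (p.1 : ℕ) + (p.2 : ℕ) = s := hp.2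
    have hp1 : (p.1 : ℕ) ≤ s := by omega
    refine Prod.ext rfl ?_
    have hle : p.1 ≤ Finc n s := by rw [Fin.le_def, hvs]; omega
    have : ((Finc n s - p.1 : Fin (n + 1)) : ℕ) = s - (p.1 : ℕ) := by
      rw [Fin.coe_sub_iff_le.mpr hle, hvs]
    apply Fin.ext
    rw [this]
    omega
  · intro i hi
    rfl
  · intro p hp
    rw [Finset.mem_filter] at hp
    have hps : (p.1 : ℕ) + (p.2 : ℕ) = s := hp.2
    have hle : p.1 ≤ Finc n s := by rw [Fin.le_def, hvs]; omega
    have hsub : Finc n s - p.1 = p.2 := by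
      apply Fin.ext
      rw [Fin.coe_sub_iff_le.mpr hle, hvs]
      omega
    rw [hps, hsub]

end regroup

section final

open Finset Polynomial

variable {K : Type*} [Field K] [CharZero K] {n : ℕ}

theorem bar_vanishes_iff' (F : (Fin (n + 1) → ℕ) → MvPolynomial (Fin (n + 1)) K)
    (D : MvPolynomial (Fin (n + 1)) K → MvPolynomial (Fin (n + 1)) K)
    (hDdef : ∀ f, D f =
      (∑ α ∈ Finset.Nat.antidiagonalTuple (n + 1) 2,
        F α * (((∏ i, (α i).factorial : ℕ) : K)⁻¹ • multiPD α f))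
      + ∑ α ∈ Finset.Nat.antidiagonalTuple (n + 1) 1, F α * multiPD α f) :
    (∀ f : Polynomial K,
      (∑ j ∈ Finset.range (n + 1),
        D (hsD K n j f) ⊗ₜ[MvPolynomial (Fin (n + 1)) K]
          Ideal.Quotient.mk
            (Ideal.span {(Polynomial.X : Polynomial (MvPolynomial (Fin (n + 1)) K)) ^ (n + 1)})
            (Polynomial.X ^ j)) = 0)
    ↔ (∀ j : Fin (n + 1),
        F (Pi.single j 1) = 0 ∧
        (∑ i ∈ Finset.univ.filter (fun i : Fin (n + 1) => i ≤ j),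
          F (Pi.single i 1 + Pi.single (j - i) 1)) = 0) := by
  constructor
  · intro h j
    have hz : ∀ f : Polynomial K, ∀ m ∈ Finset.range (n + 1), D (hsD K n m f) = 0 :=
      fun f => (tensor_zero_iff (fun m => D (hsD K n m f))).mp (h f)
    have F1 : ∀ k : Fin (n + 1), F (Pi.single k 1) = 0 := by
      intro k
      have hk := hz Polynomial.X (k : ℕ) (Finset.mem_range.mpr k.isLt)
      rw [Dform F D hDdef, Polynomial.derivative_X, Polynomial.derivative_one] at hk
      have e2 : (∑ p ∈ (Finset.univ ×ˢ Finset.univ : Finset (Fin (n+1) × Fin (n+1))),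
          if (p.1 : ℕ) + (p.2 : ℕ) ≤ (k : ℕ) then
            F (Pi.single p.1 1 + Pi.single p.2 1) *
              hsD K n ((k : ℕ) - ((p.1 : ℕ) + (p.2 : ℕ))) 0
          else 0) = 0 := by
        refine Finset.sum_eq_zero fun p _ => ?_
        rw [hsD_zero, mul_zero, ite_self]
      rw [e2, smul_zero, zero_add] at hk
      have e1 : (∑ k' : Fin (n + 1),
          if (k' : ℕ) ≤ (k : ℕ) then
            F (Pi.single k' 1) * hsD K n ((k : ℕ) - (k' : ℕ)) 1
          else 0) = F (Pi.single k 1) := by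
        rw [Finset.sum_eq_single k]
        · rw [if_pos le_rfl, Nat.sub_self, hsD_one, if_pos rfl, mul_one]
        · intro b _ hbk
          by_cases hb : (b : ℕ) ≤ (k : ℕ)
          · rw [if_pos hb, hsD_one, if_neg (fun h0 => hbk (Fin.ext (by omega))), mul_zero]
          · rw [if_neg hb]
        · intro hk'; exact absurd (Finset.mem_univ k) hk'
      rw [e1] at hk
      exact hk
    refine ⟨F1 j, ?_⟩
    have hj2 := hz (Polynomial.X ^ 2) (j : ℕ) (Finset.mem_range.mpr j.isLt)
    have hd1 : Polynomial.derivative (Polynomial.X ^ 2 : Polynomial K)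
        = Polynomial.C 2 * Polynomial.X := by
      simp [Polynomial.derivative_X_pow]
      rw [one_add_one_eq_two, map_ofNat]
    have hd2 : Polynomial.derivative (Polynomial.C (2:K) * Polynomial.X)
        = Polynomial.C 2 := by
      simp
    rw [Dform F D hDdef, hd1, hd2] at hj2
    have e1 : (∑ k' : Fin (n + 1),
        if (k' : ℕ) ≤ (j : ℕ) then
          F (Pi.single k' 1) *
            hsD K n ((j : ℕ) - (k' : ℕ)) (Polynomial.C 2 * Polynomial.X)
        else 0) = 0 := by
      refine Finset.sum_eq_zero fun k' _ => ?_
      rw [F1 k', zero_mul, ite_self]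
    rw [e1, add_zero] at hj2
    rw [pair_regroup (j : ℕ) (by omega) F
      (fun m => hsD K n ((j : ℕ) - m) (Polynomial.C 2))] at hj2
    have e3 : (∑ s ∈ Finset.range ((j : ℕ) + 1),
        (∑ i ∈ Finset.univ.filter (fun i : Fin (n + 1) => i ≤ Finc n s),
          F (Pi.single i 1 + Pi.single (Finc n s - i) 1)) *
          hsD K n ((j : ℕ) - s) (Polynomial.C 2))
        = (∑ i ∈ Finset.univ.filter (fun i : Fin (n + 1) => i ≤ j),
          F (Pi.single i 1 + Pi.single (j - i) 1)) * MvPolynomial.C 2 := by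
      rw [Finset.sum_eq_single_of_mem (j : ℕ) (Finset.self_mem_range_succ _)]
      · rw [Nat.sub_self, hsD_C, if_pos rfl]
        have hFj : Finc n (j : ℕ) = j := by
          apply Fin.ext
          rw [Finc_val (by omega)]
        rw [hFj]
      · intro s hs hsj
        rw [Finset.mem_range] at hs
        rw [hsD_C, if_neg (by omega), mul_zero]
    rw [e3] at hj2
    rcases smul_eq_zero.mp hj2 with hc | hc
    · exact absurd hc (inv_ne_zero two_ne_zero)
    · rcases mul_eq_zero.mp hc with hc' | hc'
      · exact hc'
      · exfalso
        have : (2 : K) = 0 := by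
          have := hc'
          rwa [MvPolynomial.C_eq_zero] at this
        exact two_ne_zero this
  · intro hyp f
    rw [tensor_zero_iff]
    intro m hm
    rw [Finset.mem_range] at hm
    rw [Dform F D hDdef]
    have e1 : (∑ k : Fin (n + 1),
        if (k : ℕ) ≤ m then
          F (Pi.single k 1) * hsD K n (m - (k : ℕ)) (Polynomial.derivative f)
        else 0) = 0 := by
      refine Finset.sum_eq_zero fun k _ => ?_
      rw [(hyp k).1, zero_mul, ite_self]
    rw [e1, add_zero]
    rw [pair_regroup m (by omega) F
      (fun s => hsD K n (m - s) (Polynomial.derivative (Polynomial.derivative f)))]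
    have e2 : (∑ s ∈ Finset.range (m + 1),
        (∑ i ∈ Finset.univ.filter (fun i : Fin (n + 1) => i ≤ Finc n s),
          F (Pi.single i 1 + Pi.single (Finc n s - i) 1)) *
          hsD K n (m - s) (Polynomial.derivative (Polynomial.derivative f))) = 0 := by
      refine Finset.sum_eq_zero fun s _ => ?_
      rw [(hyp (Finc n s)).2, zero_mul]
    rw [e2, smul_zero]

end final

end HSbar

/-- Kernel criterion: for a second-order derivation
`D = ∑_{|α|=2} F_α (1/α!) ∂^α + ∑_{|α|=1} F_α ∂^α` of `A_n = K[x_0,…,x_n]`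
(with `F_α = D(x^α)`), the induced map `D̄ : A → A_n ⊗ B_n`,
`f ↦ ∑_j D(d_j f) ⊗ t^j`, vanishes iff `F_{e_j} = 0` for all `j` and
`∑_{i=0}^j F_{e_i + e_{j−i}} = 0` for all `j ∈ {0,…,n}`. -/
theorem bar_vanishes_iff (K : Type*) [Field K] [CharZero K] (n : ℕ)
    (F : (Fin (n + 1) → ℕ) → MvPolynomial (Fin (n + 1)) K)
    (D : MvPolynomial (Fin (n + 1)) K → MvPolynomial (Fin (n + 1)) K)
    (hDdef : ∀ f, D f =
      (∑ α ∈ Finset.Nat.antidiagonalTuple (n + 1) 2,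
        F α * (((∏ i, (α i).factorial : ℕ) : K)⁻¹ • multiPD α f))
      + ∑ α ∈ Finset.Nat.antidiagonalTuple (n + 1) 1, F α * multiPD α f) :
    (∀ f : Polynomial K,
      (∑ j ∈ Finset.range (n + 1),
        D (hsD K n j f) ⊗ₜ[MvPolynomial (Fin (n + 1)) K]
          Ideal.Quotient.mk
            (Ideal.span {(Polynomial.X : Polynomial (MvPolynomial (Fin (n + 1)) K)) ^ (n + 1)})
            (Polynomial.X ^ j)) = 0)
    ↔ (∀ j : Fin (n + 1),
        F (Pi.single j 1) = 0 ∧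
        (∑ i ∈ Finset.univ.filter (fun i : Fin (n + 1) => i ≤ j),
          F (Pi.single i 1 + Pi.single (j - i) 1)) = 0) := HSbar.bar_vanishes_iff' F D hDdef
end

section
/- Let A = K[x_1,…,x_s], A_n its Hasse-Schmidt algebra of order n with variables x_i^{(j)} and universal derivations d_0,…,d_n. For l ≤ n and a single pair (i,j) with j ≤ l, the operator identity ∂/∂x_i^{(j)} ∘ d_l = d_{l−j} ∘ ∂/∂x_i holds as maps A → A_n, i.e. for every f ∈ K[x_1,…,x_s], ∂(d_l f)/∂x_i^{(j)} = d_{l−j}(∂f/∂x_i). -/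
open MvPolynomial

/-- The `l`-th component of the universal Hasse-Schmidt derivation of
`A = K[x_1,…,x_s]` of order `n`: `d_l f` is the coefficient of `t^l` in
`f(∑_{j≤n} x_1^{(j)} t^j, …, ∑_{j≤n} x_s^{(j)} t^j)`, an element of
`A_n = K[x_i^{(j)}]`. -/
noncomputable def hsDs (K : Type*) [CommRing K] (s n l : ℕ) :
    MvPolynomial (Fin s) K → MvPolynomial (Fin s × Fin (n + 1)) K :=
  fun f => Polynomial.coeff
    (MvPolynomial.aeval
      (fun i : Fin s =>
        ∑ j : Fin (n + 1),
          Polynomial.C (MvPolynomial.X (i, j) : MvPolynomial (Fin s × Fin (n + 1)) K) *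
            Polynomial.X ^ (j : ℕ)) f) l

section Aux

variable {K : Type*} [CommRing K] {σ : Type*}

/-- Coefficientwise application of `pderiv v` to a polynomial over `MvPolynomial σ K`. -/
noncomputable def pdCoeff (v : σ) (q : Polynomial (MvPolynomial σ K)) :
    Polynomial (MvPolynomial σ K) :=
  ⟨AddMonoidAlgebra.ofCoeff (q.toFinsupp.coeff.mapRange (pderiv v) (map_zero _))⟩

lemma coeff_pdCoeff (v : σ) (q : Polynomial (MvPolynomial σ K)) (l : ℕ) :
    (pdCoeff v q).coeff l = pderiv v (q.coeff l) := by
  rcases q with ⟨q⟩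
  simp [pdCoeff, Polynomial.coeff]

lemma pdCoeff_add (v : σ) (p q : Polynomial (MvPolynomial σ K)) :
    pdCoeff v (p + q) = pdCoeff v p + pdCoeff v q := by
  ext l; simp [coeff_pdCoeff]

lemma pdCoeff_mul (v : σ) (p q : Polynomial (MvPolynomial σ K)) :
    pdCoeff v (p * q) = pdCoeff v p * q + p * pdCoeff v q := by
  ext l
  simp only [coeff_pdCoeff, Polynomial.coeff_add, Polynomial.coeff_mul, map_sum,
    pderiv_mul, coeff_pdCoeff, ← Finset.sum_add_distrib]

lemma pdCoeff_C_mul_Xpow (v : σ) (c : MvPolynomial σ K) (e : ℕ) :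
    pdCoeff v (Polynomial.C c * Polynomial.X ^ e) =
      Polynomial.C (pderiv v c) * Polynomial.X ^ e := by
  ext l
  simp only [coeff_pdCoeff, Polynomial.coeff_C_mul, Polynomial.coeff_X_pow, mul_ite, mul_one,
    mul_zero]
  split <;> simp

end Aux

lemma pdCoeff_aeval {K : Type*} [CommRing K] (s n : ℕ)
    (i : Fin s) (j : Fin (n + 1)) (f : MvPolynomial (Fin s) K) :
    pdCoeff (i, j)
      (MvPolynomial.aeval
        (fun i : Fin s =>
          ∑ j : Fin (n + 1),
            Polynomial.C (MvPolynomial.X (i, j) : MvPolynomial (Fin s × Fin (n + 1)) K) *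
              Polynomial.X ^ (j : ℕ)) f) =
    Polynomial.X ^ (j : ℕ) *
      MvPolynomial.aeval
        (fun i : Fin s =>
          ∑ j : Fin (n + 1),
            Polynomial.C (MvPolynomial.X (i, j) : MvPolynomial (Fin s × Fin (n + 1)) K) *
              Polynomial.X ^ (j : ℕ)) (pderiv i f) := by
  set φ : Fin s → Polynomial (MvPolynomial (Fin s × Fin (n + 1)) K) :=
    fun i => ∑ j : Fin (n + 1),
      Polynomial.C (MvPolynomial.X (i, j)) * Polynomial.X ^ (j : ℕ) with hφ
  induction f using MvPolynomial.induction_on with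
  | C a =>
      have : (MvPolynomial.aeval φ) (C a) = Polynomial.C (MvPolynomial.C a) := by
        simp [MvPolynomial.algebraMap_eq, Polynomial.C_eq_natCast]
      rw [this]
      have h0 : pdCoeff (i, j) (Polynomial.C (MvPolynomial.C a) : Polynomial (MvPolynomial (Fin s × Fin (n+1)) K)) = 0 := by
        ext l
        simp [coeff_pdCoeff, Polynomial.coeff_C]
        split <;> simp
      simp [h0]
  | add p q hp hq =>
      simp [map_add, pdCoeff_add, hp, hq, mul_add]
  | mul_X p k hp =>
      have hφk : pdCoeff (i, j) (φ k) =
          if k = i then Polynomial.X ^ (j : ℕ) else 0 := by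
        rw [hφ]
        classical
        have hsum : pdCoeff (i, j) (∑ j' : Fin (n + 1),
            Polynomial.C (MvPolynomial.X ((k, j') : Fin s × Fin (n+1)) : MvPolynomial (Fin s × Fin (n+1)) K) * Polynomial.X ^ (j' : ℕ)) =
            ∑ j' : Fin (n + 1),
              pdCoeff (i, j) (Polynomial.C (MvPolynomial.X ((k, j') : Fin s × Fin (n+1)) : MvPolynomial (Fin s × Fin (n+1)) K) * Polynomial.X ^ (j' : ℕ)) := by
          ext l
          simp [coeff_pdCoeff, Polynomial.finset_sum_coeff, map_sum]
        rw [hsum]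
        rw [Finset.sum_congr rfl (fun j' _ => by rw [pdCoeff_C_mul_Xpow, pderiv_X])]
        by_cases hk : k = i
        · subst hk
          rw [Finset.sum_eq_single j]
          · rw [Pi.single_eq_same, map_one, one_mul, if_pos rfl]
          · intro b _ hb
            have : (k, b) ≠ (k, j) := by simpa using hb
            rw [Pi.single_eq_of_ne this, map_zero, zero_mul]
          · intro h; exact absurd (Finset.mem_univ j) h
        · rw [if_neg hk]
          apply Finset.sum_eq_zero
          intro b _
          have : (k, b) ≠ (i, j) := by simp [hk]
          rw [Pi.single_eq_of_ne this, map_zero, zero_mul]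
      rw [map_mul, pdCoeff_mul, hp]
      have haX : (MvPolynomial.aeval φ) (X k : MvPolynomial (Fin s) K) = φ k := MvPolynomial.aeval_X φ k
      rw [haX, pderiv_mul]
      by_cases hk : k = i
      · subst hk
        rw [pderiv_X_self, hφk, if_pos rfl, map_add, map_mul, haX]
        simp only [smul_eq_mul, mul_one]
        ring
      · rw [pderiv_X_of_ne hk, hφk, if_neg hk, mul_zero, add_zero, mul_zero, add_zero,
          map_mul, haX]
        ring
  
/-- The operator identity `∂/∂x_i^{(j)} ∘ d_l = d_{l−j} ∘ ∂/∂x_i` as maps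
`A → A_n`, for `j ≤ l ≤ n`. -/
theorem pderiv_hsDs (K : Type*) [Field K] (s n : ℕ)
    (i : Fin s) (j : Fin (n + 1)) (l : ℕ) (hjl : (j : ℕ) ≤ l) (hln : l ≤ n)
    (f : MvPolynomial (Fin s) K) :
    MvPolynomial.pderiv (i, j) (hsDs K s n l f) =
      hsDs K s n (l - (j : ℕ)) (MvPolynomial.pderiv i f) := by
  unfold hsDs
  rw [← coeff_pdCoeff, pdCoeff_aeval]
  obtain ⟨d, rfl⟩ : ∃ d, l = d + (j : ℕ) := ⟨l - j, (Nat.sub_add_cancel hjl).symm⟩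
  rw [Nat.add_sub_cancel, mul_comm, Polynomial.coeff_mul_X_pow]
end

section
/- Let k be a ring, A a k-algebra, A_n the Hasse-Schmidt algebra, B_n = A_n[t]/(t^{n+1}), and M an A_n-module. Give Der_k^m(A, M ⊗_{A_n} B_n) an A_n-module structure by (F·D)(c) = F·(D(c)) (multiplication of F ∈ A_n on the M ⊗ B_n factor). Then the canonical bijection ρ_n : Der_k^m(A, M ⊗_{A_n} B_n) → Hom_A(Ω^{(m)}_{A/k}, M ⊗_{A_n} B_n) determined by D = ρ_n(D) ∘ d_A^m is an isomorphism of A_n-modules (not just A-modules). -/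
open TensorProduct

/-- Lemma (An-A): the canonical bijection
`ρ_n : Der_k^m(A, M ⊗_{A_n} B_n) → Hom_A(Ω^{(m)}_{A/k}, M ⊗_{A_n} B_n)`
determined by `D = ρ_n(D) ∘ d_A^m` is an isomorphism of `A_n`-modules (and not
merely of `A`-modules), where `F ∈ A_n = C` acts on a derivation by
`(F·D)(c) = F • D(c)`.  Here `(d_0,…,d_n)` is the universal Hasse-Schmidt
derivation of `A`, `Ω` plays the role of `Ω^{(m)}_{A/k}` with its canonical
order-`m` derivation `dm` and its universal property (`huniv`), and
`A` acts on `T = M ⊗_{A_n} B_n` via `γ_n^#`. -/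
theorem rho_is_An_linear
    (k A C : Type*) [CommRing k] [CommRing A] [CommRing C] [Algebra k A] [Algebra k C]
    (n : ℕ) (d : ℕ → A → C)
    (hd0_algebraMap : ∀ c : k, d 0 (algebraMap k A c) = algebraMap k C c)
    (hd0_mul : ∀ x y : A, d 0 (x * y) = d 0 x * d 0 y)
    (hd0_one : d 0 1 = 1)
    (hdadd : ∀ i, ∀ x y : A, d i (x + y) = d i x + d i y)
    (hdklin : ∀ i, ∀ (c : k) (x : A),
      d i (algebraMap k A c * x) = algebraMap k C c * d i x)
    (hdvanish : ∀ i, 1 ≤ i → i ≤ n → ∀ c : k, d i (algebraMap k A c) = 0)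
    (hdleibniz : ∀ l ≤ n, ∀ x y : A,
      d l (x * y) = ∑ p ∈ Finset.HasAntidiagonal.antidiagonal l, d p.1 x * d p.2 y)
    (M : Type*) [AddCommGroup M] [Module C M]
    (m : ℕ) (hm : 1 ≤ m)
    (Ω : Type*) [AddCommGroup Ω] [Module A Ω]
    (dm : A → Ω) (hdm : IsHigherDer k m (fun (a : A) (w : Ω) => a • w) dm)
    (huniv : ∀ D : A → M ⊗[C] truncB C n, IsHigherDer k m (gammaSmul n d M) D →
      ∃! g : {g : Ω →+ M ⊗[C] truncB C n //
          ∀ (a : A) (w : Ω), g (a • w) = gammaSmul n d M a (g w)},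
        ∀ c : A, (g : Ω →+ M ⊗[C] truncB C n) (dm c) = D c) :
    ∃ ρ : {D : A → M ⊗[C] truncB C n // IsHigherDer k m (gammaSmul n d M) D} ≃
          {g : Ω →+ M ⊗[C] truncB C n //
            ∀ (a : A) (w : Ω), g (a • w) = gammaSmul n d M a (g w)},
      (∀ D (c : A), ((ρ D : {g : Ω →+ M ⊗[C] truncB C n //
          ∀ (a : A) (w : Ω), g (a • w) = gammaSmul n d M a (g w)}) :
            Ω →+ M ⊗[C] truncB C n) (dm c) = (D : A → M ⊗[C] truncB C n) c) ∧
      (∀ (F : C) (D D' : {D : A → M ⊗[C] truncB C n // IsHigherDer k m (gammaSmul n d M) D}),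
        (∀ c : A, (D' : A → M ⊗[C] truncB C n) c = F • (D : A → M ⊗[C] truncB C n) c) →
        ∀ w : Ω,
          ((ρ D' : {g : Ω →+ M ⊗[C] truncB C n //
              ∀ (a : A) (w : Ω), g (a • w) = gammaSmul n d M a (g w)}) :
                Ω →+ M ⊗[C] truncB C n) w =
            F • ((ρ D : {g : Ω →+ M ⊗[C] truncB C n //
              ∀ (a : A) (w : Ω), g (a • w) = gammaSmul n d M a (g w)}) :
                Ω →+ M ⊗[C] truncB C n) w) := by
  classical
  have keyinv : ∀ g : {g : Ω →+ M ⊗[C] truncB C n //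
      ∀ (a : A) (w : Ω), g (a • w) = gammaSmul n d M a (g w)},
      IsHigherDer k m (gammaSmul n d M) (fun c => (g : Ω →+ M ⊗[C] truncB C n) (dm c)) := by
    intro g
    obtain ⟨h1, h2, h3⟩ := hdm
    refine ⟨fun x y => by simp only [h1, map_add],
      fun c x => by simp only [h2]; exact g.2 _ _, fun x => ?_⟩
    simp only [h3, map_sum, AddMonoidHom.map_zsmul]
    refine Finset.sum_congr rfl fun r _ => ?_
    congr 1
    refine Finset.sum_congr rfl fun S _ => ?_
    exact g.2 _ _
  let ρ : {D : A → M ⊗[C] truncB C n // IsHigherDer k m (gammaSmul n d M) D} ≃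
      {g : Ω →+ M ⊗[C] truncB C n //
        ∀ (a : A) (w : Ω), g (a • w) = gammaSmul n d M a (g w)} :=
    { toFun := fun D => Classical.choose (huniv D.1 D.2)
      invFun := fun g => ⟨fun c => (g : Ω →+ M ⊗[C] truncB C n) (dm c), keyinv g⟩
      left_inv := fun D =>
        Subtype.ext (funext fun c => (Classical.choose_spec (huniv D.1 D.2)).1 c)
      right_inv := fun g =>
        ((Classical.choose_spec (huniv _ (keyinv g))).2 g (fun c => rfl)).symm }
  have hspec : ∀ D (c : A), ((ρ D : {g : Ω →+ M ⊗[C] truncB C n //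
      ∀ (a : A) (w : Ω), g (a • w) = gammaSmul n d M a (g w)}) :
        Ω →+ M ⊗[C] truncB C n) (dm c) = (D : A → M ⊗[C] truncB C n) c :=
    fun D c => (Classical.choose_spec (huniv D.1 D.2)).1 c
  refine ⟨ρ, hspec, ?_⟩
  intro F D D' h w
  set G := ((ρ D : {g : Ω →+ M ⊗[C] truncB C n //
      ∀ (a : A) (w : Ω), g (a • w) = gammaSmul n d M a (g w)}) :
        Ω →+ M ⊗[C] truncB C n) with hG
  have hGsemi : ∀ (a : A) (w : Ω), G (a • w) = gammaSmul n d M a (G w) :=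
    (ρ D).2
  let g' : Ω →+ M ⊗[C] truncB C n :=
    { toFun := fun w => F • G w
      map_zero' := by simp
      map_add' := fun x y => by simp only [map_add, smul_add] }
  have hg'semi : ∀ (a : A) (w : Ω), g' (a • w) = gammaSmul n d M a (g' w) := by
    intro a w
    show F • G (a • w) = gammaSmul n d M a (F • G w)
    rw [hGsemi]
    unfold gammaSmul
    rw [map_smul]
  have hg'D' : ∀ c : A, g' (dm c) = (D' : A → M ⊗[C] truncB C n) c := by
    intro c
    show F • G (dm c) = _
    rw [hG, hspec D c, ← h c]
  have spec := Classical.choose_spec (huniv D'.1 D'.2)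
  have h1 : ρ D' = Classical.choose (huniv D'.1 D'.2) := rfl
  have h2 : (⟨g', hg'semi⟩ : {g : Ω →+ M ⊗[C] truncB C n //
      ∀ (a : A) (w : Ω), g (a • w) = gammaSmul n d M a (g w)}) =
      Classical.choose (huniv D'.1 D'.2) := spec.2 _ hg'D'
  have h3 : ρ D' = ⟨g', hg'semi⟩ := h1.trans h2.symm
  rw [h3]
  rfl
end
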